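/- arXiv:0711.0372 — 8 statements merged into one kernel-verified Lean document; each statement's English description precedes it below -/
import Mathlib

section
/- Let N ≥ 3 be an integer and X a random variable such that N·X follows a chi-square distribution with N degrees of freedom. Then for any 0 < a < 1, E[(a - X)₊] ≤ E[(a/X - 1)₊]. -/
open MeasureTheory ProbabilityTheory Real Set

lemma gammaPDF_mul_inv_le {α r : ℝ} (hα : 1 < α) (hr : 0 < r) (x : ℝ) :
    gammaPDF α r x * (‖x⁻¹‖₊ : ENNReal) ≤
      ENNReal.ofReal (r / (α - 1)) * gammaPDF (α - 1) r x := by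
  rcases lt_trichotomy x 0 with hx | hx | hx
  · rw [gammaPDF_of_neg hx, zero_mul]; exact zero_le
  · subst hx
    rw [gammaPDF_of_nonneg le_rfl]
    rw [Real.zero_rpow (by linarith : α - 1 ≠ 0)]
    simp
  · have hx0 : x ≠ 0 := hx.ne'
    rw [gammaPDF_of_nonneg hx.le, gammaPDF_of_nonneg hx.le]
    have hnn : (‖x⁻¹‖₊ : ENNReal) = ENNReal.ofReal x⁻¹ := by
      rw [← enorm_eq_nnnorm, ← ofReal_norm, Real.norm_eq_abs, abs_of_pos (by positivity)]
    have hΓα : 0 < Real.Gamma α := Real.Gamma_pos_of_pos (by linarith)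
    have hnn1 : 0 ≤ r ^ α / Real.Gamma α * x ^ (α - 1) * Real.exp (-(r * x)) :=
      mul_nonneg (mul_nonneg (div_nonneg (Real.rpow_nonneg hr.le _) hΓα.le)
        (Real.rpow_nonneg hx.le _)) (Real.exp_nonneg _)
    rw [hnn, ← ENNReal.ofReal_mul hnn1, ← ENNReal.ofReal_mul (div_nonneg hr.le (by linarith))]
    apply le_of_eq
    congr 1
    have hG : Real.Gamma α = (α - 1) * Real.Gamma (α - 1) := by
      have h := Real.Gamma_add_one (sub_ne_zero.mpr (by linarith : α ≠ 1))
      rw [sub_add_cancel] at h; exact h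
    have hrpow : r ^ α = r ^ (α - 1) * r := by
      rw [← Real.rpow_add_one hr.ne' (α - 1), sub_add_cancel]
    have hxpow : x ^ (α - 1 - 1) = x ^ (α - 1) / x := by
      rw [Real.rpow_sub hx, Real.rpow_one]
    rw [hG, hrpow, hxpow]
    have hΓ : Real.Gamma (α - 1) ≠ 0 := (Real.Gamma_pos_of_pos (by linarith)).ne'
    field_simp

lemma integrable_inv_gammaMeasure {α r : ℝ} (hα : 1 < α) (hr : 0 < r) :
    Integrable (fun x : ℝ => x⁻¹) (gammaMeasure α r) := by
  refine ⟨measurable_inv.aestronglyMeasurable, ?_⟩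
  show (∫⁻ x, (‖x⁻¹‖₊ : ENNReal) ∂gammaMeasure α r) < ⊤
  have hm : Measurable (gammaPDF α r) := (measurable_gammaPDFReal α r).ennreal_ofReal
  rw [gammaMeasure, lintegral_withDensity_eq_lintegral_mul _ hm
    (measurable_inv.nnnorm.coe_nnreal_ennreal)]
  calc ∫⁻ x, gammaPDF α r x * (‖x⁻¹‖₊ : ENNReal) ∂volume
      ≤ ∫⁻ x, ENNReal.ofReal (r / (α - 1)) * gammaPDF (α - 1) r x ∂volume :=
        lintegral_mono (gammaPDF_mul_inv_le hα hr)
    _ = ENNReal.ofReal (r / (α - 1)) * 1 := by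
        have hm' : Measurable (gammaPDF (α - 1) r) := (measurable_gammaPDFReal (α - 1) r).ennreal_ofReal
        rw [lintegral_const_mul _ hm', lintegral_gammaPDF_eq_one (by linarith) hr]
    _ < ⊤ := by simp [ENNReal.ofReal_lt_top]

theorem chiSq_pos_part_comparison
    {Ω : Type*} [MeasurableSpace Ω] (P : Measure Ω) [IsProbabilityMeasure P]
    (N : ℕ) (hN : 3 ≤ N) (X : Ω → ℝ) (hX : Measurable X)
    (hlaw : Measure.map (fun ω => (N : ℝ) * X ω) P = gammaMeasure ((N : ℝ) / 2) (1 / 2))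
    (a : ℝ) (ha0 : 0 < a) (ha1 : a < 1) :
    ∫ ω, max (a - X ω) 0 ∂P ≤ ∫ ω, max (a / X ω - 1) 0 ∂P := by
  have hN3 : (3 : ℝ) ≤ (N : ℝ) := by exact_mod_cast hN
  have hNpos : (0 : ℝ) < N := by linarith
  have hα : 1 < (N : ℝ) / 2 := by linarith
  have hr : (0 : ℝ) < 1 / 2 := by norm_num
  have hmeas : Measurable (fun ω => (N : ℝ) * X ω) := hX.const_mul _
  -- X > 0 a.s.
  have hpos : ∀ᵐ ω ∂P, 0 < X ω := by
    rw [ae_iff]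
    have hset : {ω | ¬ 0 < X ω} = (fun ω => (N : ℝ) * X ω) ⁻¹' Iic 0 := by
      ext ω
      simp only [Set.mem_setOf_eq, not_lt, Set.mem_preimage, Set.mem_Iic]
      constructor
      · intro h; nlinarith
      · intro h; nlinarith
    rw [hset, ← Measure.map_apply hmeas measurableSet_Iic, hlaw, gammaMeasure,
      withDensity_apply _ measurableSet_Iic]
    rw [setLIntegral_congr (Iio_ae_eq_Iic (a := (0:ℝ))).symm]
    exact lintegral_gammaPDF_of_nonpos le_rfl
  -- integrability of 1/(N X)
  have h1 : Integrable ((fun x : ℝ => x⁻¹) ∘ (fun ω => (N : ℝ) * X ω)) P := by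
    rw [← integrable_map_measure measurable_inv.aestronglyMeasurable hmeas.aemeasurable, hlaw]
    exact integrable_inv_gammaMeasure hα hr
  have h2 : Integrable (fun ω => a * (N : ℝ) * ((N : ℝ) * X ω)⁻¹) P := by
    simpa [Function.comp] using (h1.const_mul (a * (N : ℝ)))
  -- measurability of the RHS integrand
  have hmR : Measurable fun ω => max (a / X ω - 1) 0 :=
    ((measurable_const.div hX).sub measurable_const).max measurable_const
  have hmL : Measurable fun ω => max (a - X ω) 0 :=
    ((measurable_const.sub hX).max measurable_const)
  -- integrability of RHS
  have hIR : Integrable (fun ω => max (a / X ω - 1) 0) P := by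
    refine Integrable.mono' h2 hmR.aestronglyMeasurable ?_
    filter_upwards [hpos] with ω hω
    rw [Real.norm_eq_abs, abs_of_nonneg (le_max_right _ _)]
    have hx : (0 : ℝ) < X ω := hω
    have key : a * (N : ℝ) * ((N : ℝ) * X ω)⁻¹ = a / X ω := by
      rw [mul_inv]
      field_simp
    rw [key]
    have hd : 0 ≤ a / X ω := by positivity
    exact max_le (by linarith) hd
  -- integrability of LHS
  have hIL : Integrable (fun ω => max (a - X ω) 0) P := by
    refine Integrable.mono' (integrable_const a) hmL.aestronglyMeasurable ?_
    filter_upwards [hpos] with ω hω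
    rw [Real.norm_eq_abs, abs_of_nonneg (le_max_right _ _)]
    exact max_le (by linarith) (by linarith)
  -- pointwise comparison
  refine integral_mono_ae hIL hIR ?_
  filter_upwards [hpos] with ω hω
  set x := X ω with hxdef
  have hx : (0 : ℝ) < x := hω
  rcases le_total a x with h | h
  · rw [max_eq_right (by linarith)]
    exact le_max_right _ _
  · have h1' : a - x ≤ a / x - 1 := by
      rw [div_sub_one hx.ne', le_div_iff₀ hx]
      nlinarith
    exact max_le_max h1' le_rfl
end

section
/- Let N ≥ 3 be an integer and X a random variable such that N·X follows a chi-square distribution with N degrees of freedom. Then for any 0 < a < 1, E[(a/X - 1)₊] ≤ (2/((1-a)(N-2))) · exp(-N·φ(a)), where φ(a) = (a - 1 - log a)/2. -/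
open MeasureTheory ProbabilityTheory
open scoped ENNReal NNReal

theorem chiSq_inverse_pos_part_bound
    {Ω : Type*} [MeasurableSpace Ω] (P : Measure Ω) [IsProbabilityMeasure P]
    (N : ℕ) (hN : 3 ≤ N) (X : Ω → ℝ) (hX : Measurable X)
    (hlaw : Measure.map (fun ω => (N : ℝ) * X ω) P = gammaMeasure ((N : ℝ) / 2) (1 / 2))
    (a : ℝ) (ha0 : 0 < a) (ha1 : a < 1) :
    ∫ ω, max (a / X ω - 1) 0 ∂P ≤
      2 / ((1 - a) * ((N : ℝ) - 2)) * Real.exp (-(N : ℝ) * ((a - 1 - Real.log a) / 2)) := by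
  have hN3 : (3:ℝ) ≤ (N:ℝ) := by exact_mod_cast hN
  obtain ⟨k, hk_def⟩ : ∃ t : ℝ, t = (N:ℝ) / 2 := ⟨_, rfl⟩
  rw [show (N:ℝ)/2 = k from hk_def.symm] at hlaw
  have hk1 : 0 < k - 1 := by rw [hk_def]; linarith
  have hkpos : 0 < k := by linarith
  obtain ⟨θ, hθ_def⟩ : ∃ t : ℝ, t = (N:ℝ) * (1 - a) / 2 := ⟨_, rfl⟩
  have hθ : 0 < θ := by
    rw [hθ_def]
    have : 0 < 1 - a := by linarith
    positivity
  obtain ⟨c, hc_def⟩ : ∃ t : ℝ, t = Real.exp θ / θ := ⟨_, rfl⟩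
  have hc : 0 < c := hc_def ▸ div_pos (Real.exp_pos _) hθ
  obtain ⟨b, hb_def⟩ : ∃ t : ℝ, t = (1 - a) / (2 * a) := ⟨_, rfl⟩
  obtain ⟨r', hr'_def⟩ : ∃ t : ℝ, t = 1 / (2 * a) := ⟨_, rfl⟩
  have hr' : 0 < r' := by rw [hr'_def]; positivity
  obtain ⟨G, hG_def⟩ : ∃ g : ℝ → ℝ, g = fun y => c * (a * N / y) * Real.exp (-(b * y)) := ⟨_, rfl⟩
  obtain ⟨K, hK_def⟩ : ∃ t : ℝ, t = c * a * N * ((1/2:ℝ) ^ k * (2*a) ^ (k-1)) / (k-1) := ⟨_, rfl⟩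
  -- a.e. nonnegativity of X
  have hNpos : (0:ℝ) < (N:ℝ) := by linarith
  have haeX : ∀ᵐ ω ∂P, 0 ≤ X ω := by
    rw [ae_iff]
    have hset : {ω | ¬ 0 ≤ X ω} = (fun ω => (N:ℝ) * X ω) ⁻¹' (Set.Iio 0) := by
      ext ω
      simp only [Set.mem_setOf_eq, Set.mem_preimage, Set.mem_Iio, not_le]
      constructor
      · intro h; exact mul_neg_of_pos_of_neg hNpos h
      · intro h; nlinarith
    rw [hset, ← Measure.map_apply (hX.const_mul _) measurableSet_Iio, hlaw]
    rw [gammaMeasure, withDensity_apply _ measurableSet_Iio]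
    exact lintegral_gammaPDF_of_nonpos le_rfl
  -- measurability of G
  have hGmeas : Measurable G := by
    rw [hG_def]
    apply Measurable.mul
    · exact (measurable_const.div measurable_id).const_mul c
    · exact ((measurable_id.const_mul b).neg).exp
  -- pointwise bound
  have hane : a ≠ 0 := ha0.ne'
  have hptwise : ∀ x : ℝ, 0 ≤ x → max (a / x - 1) 0 ≤ G ((N:ℝ) * x) := by
    intro x hx
    rcases eq_or_lt_of_le hx with h0 | hxpos
    · rw [← h0]
      simp only [hG_def, mul_zero, div_zero, zero_sub, mul_zero, zero_div]
      norm_num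
    · have hE : (0:ℝ) < Real.exp (-(b * ((N:ℝ) * x))) := Real.exp_pos _
      have hRHS : 0 ≤ G ((N:ℝ) * x) := by
        have : 0 ≤ a * (N:ℝ) / ((N:ℝ) * x) := by positivity
        simp only [hG_def]
        positivity
      refine max_le ?_ hRHS
      have key : θ * (1 - x/a) ≤ Real.exp (θ * (1 - x/a)) := by
        linarith [Real.add_one_le_exp (θ * (1 - x/a))]
      have hexp : Real.exp (θ * (1 - x/a)) = Real.exp θ * Real.exp (-(b * ((N:ℝ) * x))) := by
        rw [← Real.exp_add]
        congr 1
        rw [hθ_def, hb_def]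
        field_simp
        ring
      have h2 : 1 - x/a ≤ c * Real.exp (-(b * ((N:ℝ) * x))) := by
        rw [hc_def, div_mul_eq_mul_div, le_div_iff₀ hθ]
        calc (1 - x/a) * θ = θ * (1 - x/a) := by ring
          _ ≤ Real.exp θ * Real.exp (-(b * ((N:ℝ) * x))) := hexp ▸ key
      have hax : a * (N:ℝ) / ((N:ℝ) * x) = a / x := by
        rw [mul_comm a (N:ℝ), mul_div_mul_left _ _ hNpos.ne']
      rw [hG_def]
      show a / x - 1 ≤ c * (a * (N:ℝ) / ((N:ℝ) * x)) * Real.exp (-(b * ((N:ℝ) * x)))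
      rw [hax]
      have heq1 : a / x - 1 = (a / x) * (1 - x/a) := by
        field_simp
      rw [heq1]
      calc (a / x) * (1 - x/a) ≤ (a / x) * (c * Real.exp (-(b * ((N:ℝ) * x)))) :=
            mul_le_mul_of_nonneg_left h2 (div_pos ha0 hxpos).le
        _ = c * (a / x) * Real.exp (-(b * ((N:ℝ) * x))) := by ring
  -- pdf' integrates to 1
  have hpdf'_nonneg : ∀ y, 0 ≤ gammaPDFReal (k-1) r' y := gammaPDFReal_nonneg hk1 hr'
  have hpdf'_int : Integrable (gammaPDFReal (k-1) r') (volume : Measure ℝ) := by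
    refine ⟨(measurable_gammaPDFReal _ _).aestronglyMeasurable, ?_⟩
    rw [hasFiniteIntegral_iff_ofReal (Filter.Eventually.of_forall hpdf'_nonneg)]
    have : ∫⁻ y, ENNReal.ofReal (gammaPDFReal (k-1) r' y) = 1 :=
      lintegral_gammaPDF_eq_one hk1 hr'
    rw [this]; exact ENNReal.one_lt_top
  have hpdf'_integral : ∫ y, gammaPDFReal (k-1) r' y = 1 := by
    rw [integral_eq_lintegral_of_nonneg_ae (Filter.Eventually.of_forall hpdf'_nonneg)
      (measurable_gammaPDFReal _ _).aestronglyMeasurable]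
    have : ∫⁻ y, ENNReal.ofReal (gammaPDFReal (k-1) r' y) = 1 :=
      lintegral_gammaPDF_eq_one hk1 hr'
    rw [this, ENNReal.toReal_one]
  -- pointwise identity
  have hΓ2 : Real.Gamma (k-1) ≠ 0 := (Real.Gamma_pos_of_pos hk1).ne'
  have hΓ : Real.Gamma k = (k-1) * Real.Gamma (k-1) := by
    have h := Real.Gamma_add_one hk1.ne'
    rwa [sub_add_cancel] at h
  have hcancel : (2*a) ^ (k-1) * r' ^ (k-1) = 1 := by
    rw [hr'_def, ← Real.mul_rpow (by positivity) (by positivity)]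
    rw [show (2*a) * (1/(2*a)) = 1 by field_simp]
    exact Real.one_rpow _
  have h_eq : ∀ y : ℝ, y ≠ 0 → gammaPDFReal k (1/2) y * G y = K * gammaPDFReal (k-1) r' y := by
    intro y hy
    rcases lt_or_gt_of_ne hy with hylt | hypos
    · rw [gammaPDFReal, if_neg (not_le.mpr hylt), gammaPDFReal, if_neg (not_le.mpr hylt)]
      ring
    · rw [gammaPDFReal, if_pos hypos.le, gammaPDFReal, if_pos hypos.le]
      have hy2 : y ^ (k-1-1) = y ^ (k-1) / y := by
        rw [Real.rpow_sub hypos, Real.rpow_one]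
      have hexp : Real.exp (-(1/2*y)) * Real.exp (-(b*y)) = Real.exp (-(r'*y)) := by
        rw [← Real.exp_add]
        congr 1
        rw [hb_def, hr'_def]
        field_simp
        ring
      rw [hy2, hΓ, hK_def, hG_def, div_mul_eq_div_div]
      linear_combination ((1/2:ℝ)^k * (k-1)⁻¹ * (Real.Gamma (k-1))⁻¹ * y^(k-1) * y⁻¹ * c * a * (N:ℝ)) * hexp
        - ((1/2:ℝ)^k * (k-1)⁻¹ * (Real.Gamma (k-1))⁻¹ * y^(k-1) * y⁻¹ * c * a * (N:ℝ) *
          Real.exp (-(r'*y))) * hcancel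
  have h_eq_ae : (fun y => gammaPDFReal k (1/2) y * G y)
      =ᵐ[(volume : Measure ℝ)] (fun y => K * gammaPDFReal (k-1) r' y) := by
    have h0 : ({0} : Set ℝ)ᶜ ∈ ae (volume : Measure ℝ) := by
      rw [mem_ae_iff, compl_compl]; exact Real.volume_singleton
    filter_upwards [h0] with y hy
    exact h_eq y hy
  have h_int_prod : Integrable (fun y => gammaPDFReal k (1/2) y * G y) (volume : Measure ℝ) :=
    (hpdf'_int.const_mul K).congr h_eq_ae.symm
  -- gammaMeasure as withDensity with NNReal density
  have hγ : gammaMeasure k (1/2) =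
      (volume : Measure ℝ).withDensity (fun y => ((gammaPDFReal k (1/2) y).toNNReal : ℝ≥0∞)) := rfl
  have hpdfmeas : Measurable (fun y => (gammaPDFReal k (1/2) y).toNNReal) :=
    (measurable_gammaPDFReal k (1/2)).real_toNNReal
  have hsmul_eq : ∀ y : ℝ, ((gammaPDFReal k (1/2) y).toNNReal : ℝ) • G y
      = gammaPDFReal k (1/2) y * G y := by
    intro y
    rw [Real.coe_toNNReal _ (gammaPDFReal_nonneg hkpos (by norm_num) y)]
    rfl
  have hint_G : Integrable G (gammaMeasure k (1/2)) := by
    rw [hγ, integrable_withDensity_iff_integrable_smul hpdfmeas]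
    refine h_int_prod.congr ?_
    exact Filter.Eventually.of_forall fun y => (hsmul_eq y).symm
  have hmapmeas : AEMeasurable (fun ω => (N:ℝ) * X ω) P := (hX.const_mul _).aemeasurable
  have hint : Integrable (fun ω => G ((N:ℝ) * X ω)) P := by
    have h1 : Integrable G (Measure.map (fun ω => (N:ℝ) * X ω) P) := by rwa [hlaw]
    have := (integrable_map_measure h1.aestronglyMeasurable hmapmeas).mp h1
    exact this
  -- step 3
  have step3 : ∫ ω, max (a / X ω - 1) 0 ∂P ≤ ∫ ω, G ((N:ℝ) * X ω) ∂P := by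
    refine integral_mono_of_nonneg ?_ hint ?_
    · exact Filter.Eventually.of_forall fun ω => le_max_right _ _
    · filter_upwards [haeX] with ω hω
      exact hptwise _ hω
  -- step 4
  have step4 : ∫ ω, G ((N:ℝ) * X ω) ∂P = ∫ y, G y ∂(gammaMeasure k (1/2)) := by
    rw [← hlaw, integral_map hmapmeas]
    rw [hlaw]
    exact hint_G.aestronglyMeasurable
  -- step 5
  have step5 : ∫ y, G y ∂(gammaMeasure k (1/2)) = K := by
    rw [hγ, integral_withDensity_eq_integral_smul hpdfmeas]
    have : ∫ y, (gammaPDFReal k (1/2) y).toNNReal • G y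
        = ∫ y, K * gammaPDFReal (k-1) r' y := by
      refine integral_congr_ae ?_
      have h0 : ({0} : Set ℝ)ᶜ ∈ ae (volume : Measure ℝ) := by
        rw [mem_ae_iff, compl_compl]; exact Real.volume_singleton
      filter_upwards [h0] with y hy
      rw [NNReal.smul_def, Real.coe_toNNReal _ (gammaPDFReal_nonneg hkpos (by norm_num) y)]
      exact h_eq y hy
    rw [this, integral_const_mul, hpdf'_integral, mul_one]
  -- step 6
  have step6 : K = 2 / ((1 - a) * ((N : ℝ) - 2)) * Real.exp (-(N : ℝ) * ((a - 1 - Real.log a) / 2)) := by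
    have e1 : ((1:ℝ)/2) ^ k = (1/2:ℝ) ^ (k-1) * (1/2) := by
      rw [← Real.rpow_add_one (by norm_num : (1/2:ℝ) ≠ 0) (k-1), sub_add_cancel]
    have e2 : ((1:ℝ)/2) ^ (k-1) * (2*a) ^ (k-1) = a ^ (k-1) := by
      rw [← Real.mul_rpow (by norm_num) (by positivity)]
      congr 1
      ring
    have e3 : a ^ (k-1) * a = a ^ k := by
      rw [← Real.rpow_add_one hane, sub_add_cancel]
    have e4 : Real.exp (-(N : ℝ) * ((a - 1 - Real.log a) / 2)) = Real.exp θ * a ^ k := by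
      rw [Real.rpow_def_of_pos ha0, ← Real.exp_add]
      congr 1
      rw [hθ_def, hk_def]
      ring
    rw [hK_def, e4, e1, mul_comm ((1/2:ℝ)^(k-1)) (1/2:ℝ), mul_assoc (1/2:ℝ), e2, hc_def]
    have hθne : θ ≠ 0 := hθ.ne'
    have h1a : (1:ℝ) - a ≠ 0 := by linarith
    have hN2 : (N:ℝ) - 2 ≠ 0 := by linarith
    have hk1ne : k - 1 ≠ 0 := hk1.ne'
    field_simp
    rw [hθ_def, hk_def] at *
    linear_combination ((N:ℝ) * ((1-a)*((N:ℝ)-2))) * e3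
  rw [← step6]
  calc ∫ ω, max (a / X ω - 1) 0 ∂P ≤ ∫ ω, G ((N:ℝ) * X ω) ∂P := step3
    _ = ∫ y, G y ∂(gammaMeasure k (1/2)) := step4
    _ = K := step5
end

section
/- Let X be a random variable such that N·X follows a chi-square distribution with N degrees of freedom, N ≥ 1. Then for any t > 1, P(X ≤ 1/t) ≤ t^{-N/2} exp((N/2)(1 - 1/t)) ≤ exp(-N·φ(1/t)), where φ(a) = (a - 1 - log a)/2. -/
open MeasureTheory ProbabilityTheory

theorem chiSq_lower_deviation_bound
    {Ω : Type*} [MeasurableSpace Ω] (P : Measure Ω) [IsProbabilityMeasure P]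
    (N : ℕ) (hN : 1 ≤ N) (X : Ω → ℝ) (hX : Measurable X)
    (hlaw : Measure.map (fun ω => (N : ℝ) * X ω) P = gammaMeasure ((N : ℝ) / 2) (1 / 2))
    (t : ℝ) (ht : 1 < t) :
    (P {ω | X ω ≤ 1 / t}).toReal ≤
        t ^ (-(N : ℝ) / 2) * Real.exp ((N : ℝ) / 2 * (1 - 1 / t)) ∧
      t ^ (-(N : ℝ) / 2) * Real.exp ((N : ℝ) / 2 * (1 - 1 / t)) ≤
        Real.exp (-(N : ℝ) * ((1 / t - 1 - Real.log (1 / t)) / 2)) := by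
  have ht0 : 0 < t := lt_trans one_pos ht
  have hNpos : (0 : ℝ) < N := by exact_mod_cast hN
  have ha : (0 : ℝ) < (N : ℝ) / 2 := by positivity
  set a : ℝ := (N : ℝ) / 2 with ha_def
  set s : ℝ := (t - 1) / 2 with hs_def
  have hs : 0 < s := by rw [hs_def]; linarith
  set c : ℝ := (N : ℝ) / t with hc_def
  have hrpow : t ^ (-(N : ℝ) / 2) = Real.exp (Real.log t * (-(N : ℝ) / 2)) :=
    Real.rpow_def_of_pos ht0 _
  constructor
  · -- main Chernoff bound
    have hset : {ω | X ω ≤ 1 / t} = (fun ω => (N : ℝ) * X ω) ⁻¹' Set.Iic c := by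
      ext ω
      simp only [Set.mem_setOf_eq, Set.mem_preimage, Set.mem_Iic, hc_def]
      rw [show (N : ℝ) / t = (N : ℝ) * (1 / t) by ring, mul_le_mul_iff_right₀ hNpos]
    have hmeas : Measurable fun ω => (N : ℝ) * X ω := measurable_const.mul hX
    have hPmap : P {ω | X ω ≤ 1 / t} = (gammaMeasure a (1 / 2)) (Set.Iic c) := by
      rw [hset, ← Measure.map_apply hmeas measurableSet_Iic, hlaw]
    have hdens : (gammaMeasure a (1 / 2)) (Set.Iic c)
        = ∫⁻ x in Set.Iic c, gammaPDF a (1 / 2) x := by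
      rw [gammaMeasure, withDensity_apply _ measurableSet_Iic]
    set K : ℝ := Real.exp (s * c) * (t⁻¹) ^ a with hK_def
    have hKnn : 0 ≤ K := by positivity
    have hpoint : ∀ x : ℝ,
        ENNReal.ofReal (Real.exp (s * (c - x))) * gammaPDF a (1 / 2) x
          = ENNReal.ofReal K * gammaPDF a (t / 2) x := by
      intro x
      rcases le_or_gt 0 x with hx | hx
      · rw [gammaPDF_of_nonneg hx, gammaPDF_of_nonneg hx,
          ← ENNReal.ofReal_mul (Real.exp_nonneg _), ← ENNReal.ofReal_mul hKnn]
        congr 1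
        have h1 : ((1 : ℝ) / 2) ^ a = t⁻¹ ^ a * (t / 2) ^ a := by
          rw [← Real.mul_rpow (by positivity) (by positivity)]
          congr 1
          field_simp
        have h2 : Real.exp (s * (c - x)) * Real.exp (-(1 / 2 * x))
            = Real.exp (s * c) * Real.exp (-(t / 2 * x)) := by
          rw [← Real.exp_add, ← Real.exp_add]
          congr 1
          rw [hs_def]; ring
        calc Real.exp (s * (c - x)) *
              ((1 / 2 : ℝ) ^ a / Real.Gamma a * x ^ (a - 1) * Real.exp (-(1 / 2 * x)))
            = (Real.exp (s * (c - x)) * Real.exp (-(1 / 2 * x))) *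
              ((1 / 2 : ℝ) ^ a / Real.Gamma a * x ^ (a - 1)) := by ring
          _ = (Real.exp (s * c) * Real.exp (-(t / 2 * x))) *
              ((t⁻¹ ^ a * (t / 2) ^ a) / Real.Gamma a * x ^ (a - 1)) := by rw [h2, h1]
          _ = K * ((t / 2) ^ a / Real.Gamma a * x ^ (a - 1) * Real.exp (-(t / 2 * x))) := by
              rw [hK_def]; ring
      · rw [gammaPDF_of_neg hx, gammaPDF_of_neg hx, mul_zero, mul_zero]
    have hbound : (gammaMeasure a (1 / 2)) (Set.Iic c) ≤ ENNReal.ofReal K := by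
      rw [hdens]
      calc ∫⁻ x in Set.Iic c, gammaPDF a (1 / 2) x
          ≤ ∫⁻ x in Set.Iic c,
              ENNReal.ofReal (Real.exp (s * (c - x))) * gammaPDF a (1 / 2) x := by
            apply setLIntegral_mono' measurableSet_Iic
            intro x hx
            have h1 : (1 : ENNReal) ≤ ENNReal.ofReal (Real.exp (s * (c - x))) := by
              rw [← ENNReal.ofReal_one]
              apply ENNReal.ofReal_le_ofReal
              apply Real.one_le_exp
              have hxc : x ≤ c := hx
              nlinarith
            calc gammaPDF a (1 / 2) x = 1 * gammaPDF a (1 / 2) x := (one_mul _).symm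
              _ ≤ _ := mul_le_mul_left h1 _
        _ ≤ ∫⁻ x, ENNReal.ofReal (Real.exp (s * (c - x))) * gammaPDF a (1 / 2) x :=
            setLIntegral_le_lintegral _ _
        _ = ∫⁻ x, ENNReal.ofReal K * gammaPDF a (t / 2) x :=
            lintegral_congr fun x => hpoint x
        _ = ENNReal.ofReal K * ∫⁻ x, gammaPDF a (t / 2) x :=
            lintegral_const_mul _ (measurable_gammaPDFReal a (t / 2)).ennreal_ofReal
        _ = ENNReal.ofReal K := by
            rw [lintegral_gammaPDF_eq_one ha (by positivity), mul_one]
    have hfin : (P {ω | X ω ≤ 1 / t}).toReal ≤ K := by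
      rw [hPmap]
      exact ENNReal.toReal_le_of_le_ofReal hKnn hbound
    apply hfin.trans_eq
    rw [hK_def, mul_comm, hrpow]
    congr 1
    · rw [Real.rpow_def_of_pos (by positivity : (0:ℝ) < t⁻¹), Real.log_inv, ha_def]
      ring_nf
    · congr 1
      rw [hs_def, hc_def]
      field_simp
      ring
  · rw [hrpow, ← Real.exp_add]
    apply le_of_eq
    congr 1
    rw [one_div, Real.log_inv, ha_def]
    ring
end

section
/- Let n = 2^{J_n} with J_n ≥ 1, let 0 = x_1 < x_2 < ⋯ < x_n < 1, and let f : [0,1] → ℝ be nondecreasing. For 1 ≤ j ≤ J_n and k ∈ {0,…,2^{j-1}-1}, define c_{j,k} = (2^{(j-1)/2}/n)[Σ_{i ∈ I⁺_{j,k}} f(x_i) - Σ_{i ∈ I⁻_{j,k}} f(x_i)], where I⁺_{j,k} = {1+(2k+1)2^{-j}n, …, (2k+2)2^{-j}n} and I⁻_{j,k} = {1+2k·2^{-j}n, …, (2k+1)2^{-j}n}. Then Σ_{k=0}^{2^{j-1}-1} |c_{j,k}| ≤ 2^{-(j+1)/2} (f(x_n) - f(x_1)), and in particular Σ_k |c_{j,k}|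 ≤ 2^{-(j+1)/2} V(f) where V(f) is the total variation of f. -/
open Finset

/-- Telescoping bound for sums of increments of a monotone sequence over disjoint blocks. -/
lemma haar_tele_bound (g : ℕ → ℝ) (n m t K : ℕ)
    (hg : ∀ i i' : ℕ, 1 ≤ i → i ≤ i' → i' ≤ n → g i ≤ g i')
    (ht1 : 1 ≤ t) (htm : t ≤ m) (hK : 1 ≤ K) (hn : 2 * K * m = n) :
    ∑ k ∈ Finset.range K, (g (2 * k * m + m + t) - g (2 * k * m + t)) ≤ g n - g 1 := by
  have hm1 : 1 ≤ m := by nlinarith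
  set u : ℕ → ℕ := fun k => min (2 * k * m + t) n with hu
  have huK : u K = n := by
    simp only [hu]
    have : n ≤ 2 * K * m + t := by omega
    omega
  have hu0 : u 0 = t := by
    simp only [hu]
    have : t ≤ n := by nlinarith
    omega
  have hstep : ∀ k ∈ Finset.range K,
      g (2 * k * m + m + t) - g (2 * k * m + t) ≤ g (u (k + 1)) - g (u k) := by
    intro k hk
    rw [Finset.mem_range] at hk
    have hkK : k + 1 ≤ K := hk
    have h1 : 2 * k * m + t ≤ n := by nlinarith
    have h2 : 2 * k * m + m + t ≤ n := by nlinarith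
    have huk : u k = 2 * k * m + t := by simp only [hu]; omega
    have h4 : 2 * (k + 1) * m = 2 * k * m + 2 * m := by ring
    have hle : g (2 * k * m + m + t) ≤ g (u (k + 1)) := by
      apply hg _ _ (by omega) _ _
      · simp only [hu, h4]; omega
      · simp only [hu, h4]; omega
    rw [huk]
    linarith
  calc ∑ k ∈ Finset.range K, (g (2 * k * m + m + t) - g (2 * k * m + t))
      ≤ ∑ k ∈ Finset.range K, (g (u (k + 1)) - g (u k)) := Finset.sum_le_sum hstep
    _ = g (u K) - g (u 0) := Finset.sum_range_sub (fun k => g (u k)) K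
    _ = g n - g t := by rw [huK, hu0]
    _ ≤ g n - g 1 := by
        have : g 1 ≤ g t := hg 1 t le_rfl ht1 (by nlinarith)
        linarith

/-- Haar coefficient ℓ¹ bound for monotone functions. -/
theorem haar_coeff_l1_bound
    (Jn : ℕ) (hJn : 1 ≤ Jn) (n : ℕ) (hn : n = 2 ^ Jn)
    (x : ℕ → ℝ) (hx0 : x 1 = 0) (hxlt : x n < 1)
    (hxmono : ∀ i j : ℕ, 1 ≤ i → i < j → j ≤ n → x i < x j)
    (hxrange : ∀ i : ℕ, 1 ≤ i → i ≤ n → x i ∈ Set.Icc (0 : ℝ) 1)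
    (f : ℝ → ℝ) (hf : MonotoneOn f (Set.Icc 0 1))
    (j : ℕ) (hj1 : 1 ≤ j) (hjJ : j ≤ Jn)
    (c : ℕ → ℝ)
    (hc : ∀ k : ℕ, c k =
      (2 : ℝ) ^ (((j : ℝ) - 1) / 2) / n *
        ((∑ i ∈ Finset.Icc ((2 * k + 1) * 2 ^ (Jn - j) + 1) ((2 * k + 2) * 2 ^ (Jn - j)),
            f (x i)) -
          ∑ i ∈ Finset.Icc (2 * k * 2 ^ (Jn - j) + 1) ((2 * k + 1) * 2 ^ (Jn - j)),
            f (x i))) :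
    (∑ k ∈ Finset.range (2 ^ (j - 1)), |c k|) ≤
        (2 : ℝ) ^ (-((j : ℝ) + 1) / 2) * (f (x n) - f (x 1)) ∧
      (∑ k ∈ Finset.range (2 ^ (j - 1)), |c k|) ≤
        (2 : ℝ) ^ (-((j : ℝ) + 1) / 2) * (eVariationOn f (Set.Icc 0 1)).toReal := by
  set m : ℕ := 2 ^ (Jn - j) with hm
  set K : ℕ := 2 ^ (j - 1) with hK
  set C : ℝ := (2 : ℝ) ^ (((j : ℝ) - 1) / 2) / n with hC
  have hm1 : 1 ≤ m := Nat.one_le_two_pow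
  have hK1 : 1 ≤ K := Nat.one_le_two_pow
  have h2K : 2 * K = 2 ^ j := by
    rw [hK, ← pow_succ']
    congr 1
    omega
  have hKmn : 2 * K * m = n := by
    rw [h2K, hm, ← pow_add, hn]
    congr 1
    omega
  have hn1 : 1 ≤ n := by nlinarith
  have hnpos : (0 : ℝ) < n := by exact_mod_cast Nat.lt_of_lt_of_le Nat.zero_lt_one hn1
  have hCpos : 0 ≤ C := by positivity
  -- monotonicity of g i = f (x i)
  have hg : ∀ i i' : ℕ, 1 ≤ i → i ≤ i' → i' ≤ n → f (x i) ≤ f (x i') := by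
    intro i i' h1 hle hn'
    rcases eq_or_lt_of_le hle with rfl | hlt
    · exact le_rfl
    · exact hf (hxrange i h1 (le_trans (le_of_lt hlt) hn')) (hxrange i' (by omega) hn')
        (le_of_lt (hxmono i i' h1 hlt hn'))
  -- rewrite c k
  have esum : ∀ a : ℕ, ∑ i ∈ Finset.Icc (a + 1) (a + m), f (x i)
      = ∑ t ∈ Finset.Icc 1 m, f (x (a + t)) := by
    intro a
    rw [← Finset.map_add_left_Icc, Finset.sum_map]
    rfl
  have hck : ∀ k : ℕ, c k =
      C * ∑ t ∈ Finset.Icc 1 m, (f (x (2 * k * m + m + t)) - f (x (2 * k * m + t))) := by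
    intro k
    rw [hc k]
    have e1 : (2 * k + 1) * m + 1 = (2 * k * m + m) + 1 := by ring
    have e2 : (2 * k + 2) * m = (2 * k * m + m) + m := by ring
    have e3 : 2 * k * m + 1 = (2 * k * m) + 1 := by ring
    have e4 : (2 * k + 1) * m = (2 * k * m) + m := by ring
    rw [e1, e2, e3, e4, esum, esum, ← Finset.sum_sub_distrib]
  -- each c k is nonnegative on range K
  have hcnn : ∀ k ∈ Finset.range K, 0 ≤ c k := by
    intro k hk
    rw [Finset.mem_range] at hk
    rw [hck k]
    apply mul_nonneg hCpos
    apply Finset.sum_nonneg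
    intro t ht
    rw [Finset.mem_Icc] at ht
    have hub : 2 * k * m + m + t ≤ n := by nlinarith
    have := hg (2 * k * m + t) (2 * k * m + m + t) (by omega) (by omega) hub
    linarith
  -- main bound
  have main : (∑ k ∈ Finset.range K, |c k|) ≤ C * (m * (f (x n) - f (x 1))) := by
    have habs : (∑ k ∈ Finset.range K, |c k|) = ∑ k ∈ Finset.range K, c k :=
      Finset.sum_congr rfl (fun k hk => abs_of_nonneg (hcnn k hk))
    rw [habs]
    have hswap : (∑ k ∈ Finset.range K, c k) =
        C * ∑ t ∈ Finset.Icc 1 m, ∑ k ∈ Finset.range K,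
          (f (x (2 * k * m + m + t)) - f (x (2 * k * m + t))) := by
      rw [Finset.sum_congr rfl (fun k _ => hck k), ← Finset.mul_sum, Finset.sum_comm]
    rw [hswap]
    apply mul_le_mul_of_nonneg_left _ hCpos
    calc ∑ t ∈ Finset.Icc 1 m, ∑ k ∈ Finset.range K,
          (f (x (2 * k * m + m + t)) - f (x (2 * k * m + t)))
        ≤ ∑ t ∈ Finset.Icc 1 m, (f (x n) - f (x 1)) := by
          apply Finset.sum_le_sum
          intro t ht
          rw [Finset.mem_Icc] at ht
          exact haar_tele_bound (fun i => f (x i)) n m t K hg ht.1 ht.2 hK1 hKmn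
      _ = m * (f (x n) - f (x 1)) := by
          rw [Finset.sum_const, Nat.card_Icc]
          simp [nsmul_eq_mul]
  -- the constant computation
  have hCm : C * (m : ℝ) = (2 : ℝ) ^ (-((j : ℝ) + 1) / 2) := by
    rw [hC, hn, hm]
    push_cast
    rw [← Real.rpow_natCast 2 Jn, ← Real.rpow_natCast 2 (Jn - j), Nat.cast_sub hjJ,
      div_mul_eq_mul_div, ← Real.rpow_add (by norm_num : (0:ℝ) < 2),
      ← Real.rpow_sub (by norm_num : (0:ℝ) < 2)]
    congr 1
    ring
  have main' : (∑ k ∈ Finset.range K, |c k|) ≤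
      (2 : ℝ) ^ (-((j : ℝ) + 1) / 2) * (f (x n) - f (x 1)) := by
    calc (∑ k ∈ Finset.range K, |c k|) ≤ C * (m * (f (x n) - f (x 1))) := main
      _ = (C * m) * (f (x n) - f (x 1)) := by ring
      _ = (2 : ℝ) ^ (-((j : ℝ) + 1) / 2) * (f (x n) - f (x 1)) := by rw [hCm]
  refine ⟨main', le_trans main' ?_⟩
  apply mul_le_mul_of_nonneg_left _ (by positivity)
  -- f (x n) - f (x 1) ≤ total variation
  have h0mem : (0 : ℝ) ∈ Set.Icc (0 : ℝ) 1 := by constructor <;> norm_num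
  have h1mem : (1 : ℝ) ∈ Set.Icc (0 : ℝ) 1 := by constructor <;> norm_num
  have hbv : BoundedVariationOn f (Set.Icc 0 1) := by
    have := hf.eVariationOn_le h0mem h1mem
    rw [Set.inter_self] at this
    exact ne_top_of_le_ne_top ENNReal.ofReal_ne_top this
  exact hbv.sub_le (hxrange n hn1 le_rfl) (hxrange 1 le_rfl hn1)
end

section
/- Under the setting of the discrete Haar expansion of a bounded-variation function f (with n = 2^{J_n} sample points and empirical norm ‖g‖_n² = (1/n)Σ_i g(x_i)²), the linear approximation f_J (projection onto Haar wavelets of levels ≤ J) satisfies ‖f - f_J‖_n ≤ 2 V(f) 2^{-J/2} for all 0 ≤ J ≤ J_n. -/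
open Finset

lemma mem_block_iff {m a i : ℕ} (hm : 0 < m) (hi : 1 ≤ i) :
    i ∈ Finset.Icc (a * m + 1) ((a + 1) * m) ↔ (i - 1) / m = a := by
  rw [Finset.mem_Icc, Nat.add_one_mul]
  constructor
  · rintro ⟨h1, h2⟩
    exact Nat.div_eq_of_lt_le (by omega) (by rw [Nat.succ_mul]; omega)
  · rintro rfl
    have h1 := Nat.div_mul_le_self (i - 1) m
    have h2 := Nat.lt_mul_div_succ (i - 1) hm
    rw [Nat.mul_comm, Nat.add_one_mul] at h2
    omega

lemma sum_blocks {M : Type*} [AddCommMonoid M] (F : ℕ → M) (m B : ℕ) :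
    ∑ i ∈ Finset.Ioc 0 (B * m), F i
      = ∑ b ∈ Finset.range B, ∑ i ∈ Finset.Ioc (b * m) ((b + 1) * m), F i := by
  induction B with
  | zero => simp
  | succ B ih =>
      rw [Finset.sum_range_succ, ← ih,
        Finset.sum_Ioc_consecutive F (Nat.zero_le _) (Nat.mul_le_mul_right m (by omega))]

lemma sum_indicator_Icc (g : ℕ → ℝ) (n a e : ℕ) (ha : 1 ≤ a) (he : e ≤ n) :
    ∑ i ∈ Finset.Icc 1 n, g i * (if i ∈ Finset.Icc a e then (1:ℝ) else 0)
      = ∑ i ∈ Finset.Icc a e, g i := by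
  simp only [mul_ite, mul_one, mul_zero]
  rw [Finset.sum_ite_mem]
  congr 1
  ext i
  simp only [Finset.mem_inter, Finset.mem_Icc]
  omega

noncomputable def haarS (f : ℝ → ℝ) (x : ℕ → ℝ) (Jn j b : ℕ) : ℝ :=
  ∑ i ∈ Finset.Icc (b * 2 ^ (Jn - j) + 1) ((b + 1) * 2 ^ (Jn - j)), f (x i)

noncomputable def haarA (f : ℝ → ℝ) (x : ℕ → ℝ) (Jn j i : ℕ) : ℝ :=
  haarS f x Jn j ((i - 1) / 2 ^ (Jn - j)) / 2 ^ (Jn - j)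

lemma haarS_split (f : ℝ → ℝ) (x : ℕ → ℝ) (Jn j b : ℕ) (hj : 1 ≤ j) (hjJ : j ≤ Jn) :
    haarS f x Jn (j - 1) b = haarS f x Jn j (2 * b) + haarS f x Jn j (2 * b + 1) := by
  have hm : 2 ^ (Jn - (j - 1)) = 2 ^ (Jn - j) * 2 := by
    rw [← pow_succ]
    congr 1
    omega
  unfold haarS
  rw [hm]
  have e1 : b * (2 ^ (Jn - j) * 2) = 2 * b * 2 ^ (Jn - j) := by ring
  have e2 : (b + 1) * (2 ^ (Jn - j) * 2) = (2 * b + 1 + 1) * 2 ^ (Jn - j) := by ring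
  rw [e1, e2, Finset.Icc_add_one_left_eq_Ioc, Finset.Icc_add_one_left_eq_Ioc, Finset.Icc_add_one_left_eq_Ioc,
    Finset.sum_Ioc_consecutive _ (Nat.mul_le_mul_right _ (by omega))
      (Nat.mul_le_mul_right _ (by omega))]

/-- Linear Haar approximation bound for bounded-variation functions. -/
theorem haar_linear_approximation_BV
    (Jn : ℕ) (hJn : 1 ≤ Jn) (n : ℕ) (hn : n = 2 ^ Jn)
    (x : ℕ → ℝ) (hx0 : x 1 = 0) (hxlt : x n < 1)
    (hxmono : ∀ i j : ℕ, 1 ≤ i → i < j → j ≤ n → x i < x j)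
    (hxrange : ∀ i : ℕ, 1 ≤ i → i ≤ n → x i ∈ Set.Icc (0 : ℝ) 1)
    (f : ℝ → ℝ) (hf : BoundedVariationOn f (Set.Icc 0 1))
    (φ : ℕ → ℕ → ℕ → ℝ)
    (hφ0 : ∀ i : ℕ, φ 0 0 i = 1)
    (hφ : ∀ j k i : ℕ, 1 ≤ j →
      φ j k i = (2 : ℝ) ^ (((j : ℝ) - 1) / 2) *
        ((if i ∈ Finset.Icc ((2 * k + 1) * 2 ^ (Jn - j) + 1) ((2 * k + 2) * 2 ^ (Jn - j))
            then (1 : ℝ) else 0) -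
          (if i ∈ Finset.Icc (2 * k * 2 ^ (Jn - j) + 1) ((2 * k + 1) * 2 ^ (Jn - j))
            then (1 : ℝ) else 0)))
    (c : ℕ → ℕ → ℝ)
    (hc : ∀ j k : ℕ, c j k = (1 / (n : ℝ)) * ∑ i ∈ Finset.Icc 1 n, f (x i) * φ j k i)
    (J : ℕ) (hJ : J ≤ Jn)
    (fJ : ℕ → ℝ)
    (hfJ : ∀ i : ℕ, fJ i =
      ∑ j ∈ Finset.range (J + 1), ∑ k ∈ Finset.range (2 ^ (j - 1)), c j k * φ j k i) :
    Real.sqrt ((1 / (n : ℝ)) * ∑ i ∈ Finset.Icc 1 n, (f (x i) - fJ i) ^ 2) ≤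
      2 * (eVariationOn f (Set.Icc 0 1)).toReal * (2 : ℝ) ^ (-(J : ℝ) / 2) := by
  classical
  have hn0 : 0 < n := by rw [hn]; positivity
  have hxmono' : ∀ i j : ℕ, 1 ≤ i → i ≤ j → j ≤ n → x i ≤ x j := by
    intro i j h1 h2 h3
    rcases eq_or_lt_of_le h2 with rfl | h
    · exact le_refl _
    · exact (hxmono i j h1 h h3).le
  set V : ℝ := (eVariationOn f (Set.Icc (0:ℝ) 1)).toReal with hVdef
  have hV0 : 0 ≤ V := ENNReal.toReal_nonneg
  -- value of φ
  have hφval : ∀ j k i : ℕ, 1 ≤ j → 1 ≤ i →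
      φ j k i = if (i - 1) / 2 ^ (Jn - j) = 2 * k + 1 then (2:ℝ) ^ (((j:ℝ) - 1) / 2)
        else if (i - 1) / 2 ^ (Jn - j) = 2 * k then -(2:ℝ) ^ (((j:ℝ) - 1) / 2) else 0 := by
    intro j k i hj hi
    have hm : (0:ℕ) < 2 ^ (Jn - j) := by positivity
    have hR : (i ∈ Finset.Icc ((2 * k + 1) * 2 ^ (Jn - j) + 1) ((2 * k + 2) * 2 ^ (Jn - j)))
        ↔ (i - 1) / 2 ^ (Jn - j) = 2 * k + 1 := by
      have := mem_block_iff (m := 2 ^ (Jn - j)) (a := 2 * k + 1) (i := i) hm hi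
      rw [show 2 * k + 1 + 1 = 2 * k + 2 by ring] at this
      exact this
    have hL : (i ∈ Finset.Icc (2 * k * 2 ^ (Jn - j) + 1) ((2 * k + 1) * 2 ^ (Jn - j)))
        ↔ (i - 1) / 2 ^ (Jn - j) = 2 * k := by
      have := mem_block_iff (m := 2 ^ (Jn - j)) (a := 2 * k) (i := i) hm hi
      rw [show 2 * k + 1 = 2 * k + 1 by rfl] at this
      exact this
    rw [hφ j k i hj]
    by_cases hr : (i - 1) / 2 ^ (Jn - j) = 2 * k + 1
    · have hl : ¬ ((i - 1) / 2 ^ (Jn - j) = 2 * k) := by omega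
      rw [if_pos (hR.mpr hr), if_neg (fun h => hl (hL.mp h)), if_pos hr]
      ring
    · by_cases hl : (i - 1) / 2 ^ (Jn - j) = 2 * k
      · rw [if_neg (fun h => hr (hR.mp h)), if_pos (hL.mpr hl), if_neg hr, if_pos hl]
        ring
      · rw [if_neg (fun h => hr (hR.mp h)), if_neg (fun h => hl (hL.mp h)), if_neg hr, if_neg hl]
        ring
  -- value of c
  have hcval : ∀ j k : ℕ, 1 ≤ j → j ≤ Jn → k < 2 ^ (j - 1) →
      c j k = (2:ℝ) ^ (((j:ℝ) - 1) / 2) *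
        (haarS f x Jn j (2 * k + 1) - haarS f x Jn j (2 * k)) / n := by
    intro j k hj hjJ hk
    have hmle : (2 * k + 2) * 2 ^ (Jn - j) ≤ n := by
      have h2 : 2 * k + 2 ≤ 2 ^ j := by
        have : 2 ^ j = 2 * 2 ^ (j - 1) := by rw [← pow_succ']; congr 1; omega
        omega
      calc (2 * k + 2) * 2 ^ (Jn - j) ≤ 2 ^ j * 2 ^ (Jn - j) := Nat.mul_le_mul_right _ h2
        _ = 2 ^ Jn := by rw [← pow_add]; congr 1; omega
        _ = n := hn.symm
    have hmle' : (2 * k + 1) * 2 ^ (Jn - j) ≤ n :=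
      le_trans (Nat.mul_le_mul_right _ (by omega)) hmle
    rw [hc]
    have expand : ∀ i ∈ Finset.Icc 1 n, f (x i) * φ j k i
        = (2:ℝ) ^ (((j:ℝ) - 1) / 2) *
          (f (x i) * (if i ∈ Finset.Icc ((2 * k + 1) * 2 ^ (Jn - j) + 1)
              ((2 * k + 2) * 2 ^ (Jn - j)) then (1:ℝ) else 0)
           - f (x i) * (if i ∈ Finset.Icc (2 * k * 2 ^ (Jn - j) + 1)
              ((2 * k + 1) * 2 ^ (Jn - j)) then (1:ℝ) else 0)) := by
      intro i _
      rw [hφ j k i hj]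
      ring
    rw [Finset.sum_congr rfl expand, ← Finset.mul_sum, Finset.sum_sub_distrib,
      sum_indicator_Icc _ n _ _ (by omega) hmle,
      sum_indicator_Icc _ n _ _ (by omega) hmle']
    have hS1 : ∑ i ∈ Finset.Icc ((2 * k + 1) * 2 ^ (Jn - j) + 1) ((2 * k + 2) * 2 ^ (Jn - j)),
        f (x i) = haarS f x Jn j (2 * k + 1) := by
      unfold haarS
      congr 2 <;> omega
    have hS0 : ∑ i ∈ Finset.Icc (2 * k * 2 ^ (Jn - j) + 1) ((2 * k + 1) * 2 ^ (Jn - j)),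
        f (x i) = haarS f x Jn j (2 * k) := by
      unfold haarS
      congr 2 <;> omega
    rw [hS1, hS0]
    ring
  -- auxiliary powers
  have hP0 : (0:ℝ) < (2:ℝ) ^ (((0:ℝ)) / 2) := by positivity
  have hppos : ∀ j : ℕ, (0:ℝ) < (2:ℝ) ^ (((j:ℝ) - 1) / 2) :=
    fun j => Real.rpow_pos_of_pos two_pos _
  have hpow2 : ∀ j : ℕ, 1 ≤ j → (2:ℝ) ^ (((j:ℝ) - 1) / 2) * (2:ℝ) ^ (((j:ℝ) - 1) / 2)
      = (2:ℝ) ^ (j - 1 : ℕ) := by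
    intro j hj
    rw [← Real.rpow_add two_pos, ← Real.rpow_natCast 2 (j - 1)]
    congr 1
    rw [Nat.cast_sub hj]
    push_cast
    ring
  have hnj : ∀ j : ℕ, 1 ≤ j → j ≤ Jn → n = 2 ^ (j - 1) * (2 ^ (Jn - j) * 2) := by
    intro j hj hjJ
    rw [hn, ← pow_succ, ← pow_add]
    congr 1
    omega
  have hlevel : ∀ j i : ℕ, 1 ≤ j → j ≤ Jn → 1 ≤ i → i ≤ n →
      (∑ k ∈ Finset.range (2 ^ (j - 1)), c j k * φ j k i)
        = haarA f x Jn j i - haarA f x Jn (j - 1) i := by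
    intro j i hj hjJ hi hin
    have hm0 : (0:ℕ) < 2 ^ (Jn - j) := by positivity
    obtain ⟨q, hq⟩ : ∃ q, (i - 1) / 2 ^ (Jn - j) = q := ⟨_, rfl⟩
    have hmm : 2 ^ (Jn - (j - 1)) = 2 ^ (Jn - j) * 2 := by
      rw [← pow_succ]
      congr 1
      omega
    have hq2 : (i - 1) / 2 ^ (Jn - (j - 1)) = q / 2 := by
      rw [hmm, ← Nat.div_div_eq_div_mul, hq]
    have hblt : q / 2 < 2 ^ (j - 1) := by
      have h1 : i - 1 < 2 ^ (Jn - j) * 2 * 2 ^ (j - 1) := by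
        have h2 := hnj j hj hjJ
        have h4 : i - 1 < n := by omega
        rw [h2] at h4
        exact h4.trans_eq (mul_comm _ _)
      have h3 : q / 2 = (i - 1) / (2 ^ (Jn - j) * 2) := by
        rw [← Nat.div_div_eq_div_mul, hq]
      rw [h3]
      exact Nat.div_lt_of_lt_mul h1
    have hAj : haarA f x Jn j i = haarS f x Jn j q / 2 ^ (Jn - j) := by
      unfold haarA
      rw [hq]
    have hAj1 : haarA f x Jn (j - 1) i
        = (haarS f x Jn j (2 * (q / 2)) + haarS f x Jn j (2 * (q / 2) + 1))
          / (2 ^ (Jn - j) * 2) := by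
      unfold haarA
      rw [hq2, haarS_split f x Jn j (q / 2) hj hjJ,
        show Jn - (j - 1) = (Jn - j) + 1 by omega, pow_succ]
    have hmR : ((2:ℝ) ^ (Jn - j) : ℝ) ≠ 0 := by positivity
    have hnreal : (n:ℝ) = ((2:ℝ) ^ (((j:ℝ) - 1) / 2) * (2:ℝ) ^ (((j:ℝ) - 1) / 2))
        * ((2:ℝ) ^ (Jn - j) * 2) := by
      rw [hpow2 j hj, hnj j hj hjJ]
      push_cast
      ring
    rw [Finset.sum_eq_single (q / 2)]
    · rw [hcval j (q / 2) hj hjJ hblt, hφval j (q / 2) i hj hi, hq, hAj, hAj1]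
      have hqcases : q = 2 * (q / 2) ∨ q = 2 * (q / 2) + 1 := by omega
      rcases hqcases with hqc | hqc
      · rw [if_neg (by omega), if_pos (by omega), hnreal]
        nth_rewrite 3 [hqc]
        field_simp
        ring
      · rw [if_pos (by omega), hnreal]
        nth_rewrite 3 [hqc]
        field_simp
        ring
    · intro k _ hk
      rw [hφval j k i hj hi, hq, if_neg (by omega), if_neg (by omega), mul_zero]
    · intro hmem
      exact absurd (Finset.mem_range.mpr hblt) hmem
  -- level 0
  have hnR : ((n:ℝ)) = (2:ℝ) ^ Jn := by rw [hn]; push_cast; ring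
  have hA0 : ∀ i : ℕ, 1 ≤ i → i ≤ n → c 0 0 * φ 0 0 i = haarA f x Jn 0 i := by
    intro i hi hin
    have hs : ∀ i' ∈ Finset.Icc 1 n, f (x i') * φ 0 0 i' = f (x i') := by
      intro i' _
      rw [hφ0, mul_one]
    rw [hc 0 0, hφ0 i, mul_one, Finset.sum_congr rfl hs]
    unfold haarA haarS
    rw [Nat.sub_zero, Nat.div_eq_of_lt (by omega : i - 1 < 2 ^ Jn), ← hnR, ← hn]
    norm_num
    ring
  -- telescoping
  have htel : ∀ i : ℕ, 1 ≤ i → i ≤ n → fJ i = haarA f x Jn J i := by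
    intro i hi hin
    rw [hfJ i, Finset.sum_range_succ']
    have hstep : ∀ j ∈ Finset.range J,
        (∑ k ∈ Finset.range (2 ^ (j + 1 - 1)), c (j + 1) k * φ (j + 1) k i)
          = haarA f x Jn (j + 1) i - haarA f x Jn j i := by
      intro j hjr
      rw [Finset.mem_range] at hjr
      have h := hlevel (j + 1) i (by omega) (by omega) hi hin
      rw [h, Nat.add_sub_cancel]
    rw [Finset.sum_congr rfl hstep, Finset.sum_range_sub (fun j => haarA f x Jn j i)]
    have h0 : (∑ k ∈ Finset.range (2 ^ (0 - 1)), c 0 k * φ 0 k i) = haarA f x Jn 0 i := by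
      rw [show (2:ℕ) ^ (0 - 1) = 1 from rfl, Finset.sum_range_one]
      exact hA0 i hi hin
    rw [h0]
    ring
  -- blocks at level J
  obtain ⟨M, hM⟩ : ∃ M, 2 ^ (Jn - J) = M := ⟨_, rfl⟩
  obtain ⟨B, hB⟩ : ∃ B, 2 ^ J = B := ⟨_, rfl⟩
  have hM0 : 0 < M := by rw [← hM]; positivity
  have hB0 : 0 < B := by rw [← hB]; positivity
  have hMR : ((M:ℝ)) = (2:ℝ) ^ (Jn - J) := by rw [← hM]; push_cast; ring
  have hnBM : n = B * M := by rw [hn, ← hB, ← hM, ← pow_add]; congr 1; omega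
  have hlt1 : ∀ b : ℕ, b * M < (b + 1) * M := by
    intro b
    rw [Nat.add_one_mul]
    omega
  have hle1 : ∀ b : ℕ, b < B → (b + 1) * M ≤ n := by
    intro b hb
    rw [hnBM]
    exact Nat.mul_le_mul_right _ (by omega)
  obtain ⟨e, he⟩ : ∃ e : ℕ → ENNReal, ∀ b, e b
      = eVariationOn f (Set.Icc (x (b * M + 1)) (x ((b + 1) * M))) := ⟨_, fun _ => rfl⟩
  have hesub : ∀ b, b < B → Set.Icc (x (b * M + 1)) (x ((b + 1) * M)) ⊆ Set.Icc (0:ℝ) 1 := by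
    intro b hb
    have h1 := hxrange (b * M + 1) (by omega) (le_trans (hlt1 b) (hle1 b hb))
    have h2 := hxrange ((b + 1) * M) (by have := hlt1 b; omega) (hle1 b hb)
    exact Set.Icc_subset_Icc h1.1 h2.2
  have hebv : ∀ b, b < B → BoundedVariationOn f (Set.Icc (x (b * M + 1)) (x ((b + 1) * M))) :=
    fun b hb => hf.mono (hesub b hb)
  have hpoint : ∀ b, b < B → ∀ i ∈ Finset.Ioc (b * M) ((b + 1) * M),
      |f (x i) - haarA f x Jn J i| ≤ (e b).toReal := by
    intro b hb i hmem
    rw [Finset.mem_Ioc] at hmem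
    have hi1 : 1 ≤ i := by omega
    have hin : i ≤ n := le_trans hmem.2 (hle1 b hb)
    have hdiv : (i - 1) / 2 ^ (Jn - J) = b := by
      rw [← mem_block_iff (m := 2 ^ (Jn - J)) (a := b) (i := i) (by positivity) hi1,
        Finset.mem_Icc, hM]
      omega
    have hSb : haarS f x Jn J b = ∑ i' ∈ Finset.Icc (b * M + 1) ((b + 1) * M), f (x i') := by
      unfold haarS
      rw [hM]
    have hAJ : haarA f x Jn J i = haarS f x Jn J b / (M:ℝ) := by
      unfold haarA
      rw [hdiv, ← hMR]
    have hcard : (Finset.Icc (b * M + 1) ((b + 1) * M)).card = M := by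
      rw [Nat.card_Icc, Nat.add_one_mul]
      omega
    have key : f (x i) - haarS f x Jn J b / (M:ℝ)
        = (∑ i' ∈ Finset.Icc (b * M + 1) ((b + 1) * M), (f (x i) - f (x i'))) / (M:ℝ) := by
      rw [Finset.sum_sub_distrib, Finset.sum_const, hcard, hSb, nsmul_eq_mul]
      have : ((M:ℝ)) ≠ 0 := by positivity
      field_simp
    have hdist : ∀ i' ∈ Finset.Icc (b * M + 1) ((b + 1) * M),
        |f (x i) - f (x i')| ≤ (e b).toReal := by
      intro i' hi'
      rw [Finset.mem_Icc] at hi'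
      have hi'n : i' ≤ n := le_trans hi'.2 (hle1 b hb)
      have hmx : x i ∈ Set.Icc (x (b * M + 1)) (x ((b + 1) * M)) :=
        ⟨hxmono' _ _ (by omega) (by omega) hin, hxmono' _ _ hi1 hmem.2 (hle1 b hb)⟩
      have hmx' : x i' ∈ Set.Icc (x (b * M + 1)) (x ((b + 1) * M)) :=
        ⟨hxmono' _ _ (by omega) (by omega) hi'n, hxmono' _ _ (by omega) hi'.2 (hle1 b hb)⟩
      have hd := (hebv b hb).dist_le hmx hmx'
      rw [Real.dist_eq] at hd
      rw [he b]
      exact hd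
    rw [hAJ, key, abs_div, abs_of_nonneg (by positivity : (0:ℝ) ≤ (M:ℝ))]
    rw [div_le_iff₀ (by positivity : (0:ℝ) < (M:ℝ))]
    calc |∑ i' ∈ Finset.Icc (b * M + 1) ((b + 1) * M), (f (x i) - f (x i'))|
        ≤ ∑ i' ∈ Finset.Icc (b * M + 1) ((b + 1) * M), |f (x i) - f (x i')| :=
          Finset.abs_sum_le_sum_abs _ _
      _ ≤ ∑ _i' ∈ Finset.Icc (b * M + 1) ((b + 1) * M), (e b).toReal :=
          Finset.sum_le_sum hdist
      _ = (e b).toReal * (M:ℝ) := by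
          rw [Finset.sum_const, hcard, nsmul_eq_mul]
          ring
  have hblocksq : ∀ b ∈ Finset.range B,
      (∑ i ∈ Finset.Ioc (b * M) ((b + 1) * M), (f (x i) - haarA f x Jn J i) ^ 2)
        ≤ (M:ℝ) * (e b).toReal ^ 2 := by
    intro b hb
    rw [Finset.mem_range] at hb
    have hcard : (Finset.Ioc (b * M) ((b + 1) * M)).card = M := by
      rw [Nat.card_Ioc, Nat.add_one_mul]
      omega
    calc (∑ i ∈ Finset.Ioc (b * M) ((b + 1) * M), (f (x i) - haarA f x Jn J i) ^ 2)
        ≤ ∑ _i ∈ Finset.Ioc (b * M) ((b + 1) * M), (e b).toReal ^ 2 := by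
          apply Finset.sum_le_sum
          intro i hi
          have h := hpoint b hb i hi
          have h' := abs_le.mp h
          exact sq_le_sq' (by linarith [h'.1]) h'.2
      _ = (M:ℝ) * (e b).toReal ^ 2 := by
          rw [Finset.sum_const, hcard, nsmul_eq_mul]
  -- sum of variations
  have hevsum : ∀ C : ℕ, 1 ≤ C → C ≤ B → (∑ b ∈ Finset.range C, e b)
      ≤ eVariationOn f (Set.Icc 0 (x (C * M))) := by
    intro C hC1
    induction C, hC1 using Nat.le_induction with
    | base =>
        intro _
        rw [Finset.sum_range_one, he 0]
        norm_num
        rw [hx0]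
    | succ C hC ih =>
        intro hCB
        have hCMn : (C + 1) * M ≤ n := hle1 C (by omega)
        have hCM1 : 1 ≤ C * M := Nat.mul_pos (by omega) hM0
        have h0b : (0:ℝ) ≤ x (C * M + 1) :=
          (hxrange (C * M + 1) (by omega) (by have := hlt1 C; omega)).1
        have hbc : x (C * M + 1) ≤ x ((C + 1) * M) :=
          hxmono' _ _ (by omega) (by have := hlt1 C; omega) hCMn
        have key := eVariationOn.Icc_add_Icc f (s := (Set.univ : Set ℝ)) h0b hbc (Set.mem_univ _)
        simp only [Set.univ_inter] at key
        rw [Finset.sum_range_succ]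
        calc (∑ b ∈ Finset.range C, e b) + e C
            ≤ eVariationOn f (Set.Icc 0 (x (C * M))) + e C := add_le_add_left (ih (by omega)) _
          _ ≤ eVariationOn f (Set.Icc 0 (x (C * M + 1))) + e C := by
              apply add_le_add_left
              apply eVariationOn.mono
              apply Set.Icc_subset_Icc le_rfl
              exact hxmono' (C * M) (C * M + 1) (by omega) (by omega) (by have := hlt1 C; omega)
          _ = eVariationOn f (Set.Icc 0 (x (C * M + 1)))
              + eVariationOn f (Set.Icc (x (C * M + 1)) (x ((C + 1) * M))) := by rw [he C]
          _ = eVariationOn f (Set.Icc 0 (x ((C + 1) * M))) := key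
  have hVsum : (∑ b ∈ Finset.range B, (e b).toReal) ≤ V := by
    have h1 := hevsum B (by omega) le_rfl
    have h2 : eVariationOn f (Set.Icc 0 (x (B * M))) ≤ eVariationOn f (Set.Icc (0:ℝ) 1) := by
      apply eVariationOn.mono
      apply Set.Icc_subset_Icc le_rfl
      rw [← hnBM]
      exact (hxrange n (by omega) le_rfl).2
    have hfin : ∀ b ∈ Finset.range B, e b ≠ ⊤ := by
      intro b hb
      rw [he b]
      exact hebv b (Finset.mem_range.mp hb)
    rw [hVdef, ← ENNReal.toReal_sum hfin]
    exact ENNReal.toReal_mono hf (h1.trans h2)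
  -- main sum bound
  have hsum_main : (∑ i ∈ Finset.Icc 1 n, (f (x i) - fJ i) ^ 2) ≤ (M:ℝ) * V ^ 2 := by
    have hrw : ∀ i ∈ Finset.Icc 1 n, (f (x i) - fJ i) ^ 2
        = (f (x i) - haarA f x Jn J i) ^ 2 := by
      intro i hi
      rw [Finset.mem_Icc] at hi
      rw [htel i hi.1 hi.2]
    rw [Finset.sum_congr rfl hrw,
      show Finset.Icc 1 n = Finset.Ioc 0 n by rw [← Finset.Icc_add_one_left_eq_Ioc]; rfl, hnBM, sum_blocks]
    calc (∑ b ∈ Finset.range B, ∑ i ∈ Finset.Ioc (b * M) ((b + 1) * M),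
            (f (x i) - haarA f x Jn J i) ^ 2)
        ≤ ∑ b ∈ Finset.range B, (M:ℝ) * (e b).toReal ^ 2 := Finset.sum_le_sum hblocksq
      _ = (M:ℝ) * ∑ b ∈ Finset.range B, (e b).toReal ^ 2 := by rw [Finset.mul_sum]
      _ ≤ (M:ℝ) * (∑ b ∈ Finset.range B, (e b).toReal) ^ 2 := by
          apply mul_le_mul_of_nonneg_left _ (by positivity)
          exact Finset.sum_sq_le_sq_sum_of_nonneg (fun b _ => ENNReal.toReal_nonneg)
      _ ≤ (M:ℝ) * V ^ 2 := by
          apply mul_le_mul_of_nonneg_left _ (by positivity)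
          exact pow_le_pow_left₀ (Finset.sum_nonneg fun b _ => ENNReal.toReal_nonneg) hVsum 2
  -- final
  have hMn : (M:ℝ) / (n:ℝ) = (2:ℝ) ^ (-(J:ℝ)) := by
    rw [hMR, hnR, ← Real.rpow_natCast 2 (Jn - J), ← Real.rpow_natCast 2 Jn,
      ← Real.rpow_sub two_pos]
    congr 1
    rw [Nat.cast_sub hJ]
    ring
  have hfrac : (1 / (n:ℝ)) * (∑ i ∈ Finset.Icc 1 n, (f (x i) - fJ i) ^ 2)
      ≤ (2:ℝ) ^ (-(J:ℝ)) * V ^ 2 := by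
    calc (1 / (n:ℝ)) * (∑ i ∈ Finset.Icc 1 n, (f (x i) - fJ i) ^ 2)
        ≤ (1 / (n:ℝ)) * ((M:ℝ) * V ^ 2) := by
          apply mul_le_mul_of_nonneg_left hsum_main (by positivity)
      _ = ((M:ℝ) / (n:ℝ)) * V ^ 2 := by ring
      _ = (2:ℝ) ^ (-(J:ℝ)) * V ^ 2 := by rw [hMn]
  have hsqrt : Real.sqrt ((2:ℝ) ^ (-(J:ℝ)) * V ^ 2) = (2:ℝ) ^ (-(J:ℝ) / 2) * V := by
    rw [Real.sqrt_mul (by positivity) , Real.sqrt_sq hV0]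
    congr 1
    rw [Real.sqrt_eq_rpow, ← Real.rpow_mul (by norm_num : (0:ℝ) ≤ 2)]
    congr 1
    ring
  calc Real.sqrt ((1 / (n:ℝ)) * ∑ i ∈ Finset.Icc 1 n, (f (x i) - fJ i) ^ 2)
      ≤ Real.sqrt ((2:ℝ) ^ (-(J:ℝ)) * V ^ 2) := Real.sqrt_le_sqrt hfrac
    _ = (2:ℝ) ^ (-(J:ℝ) / 2) * V := hsqrt
    _ ≤ 2 * V * (2:ℝ) ^ (-(J:ℝ) / 2) := by
        nlinarith [hV0, (Real.rpow_pos_of_pos two_pos (-(J:ℝ) / 2)).le]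
end

section
/- Under the same setting, the nonlinear approximation f̃_J, obtained from f_{J-1} by adding at each level j ≥ J the K_{j,J} = ⌊(j-J+1)^{-3} 2^{J-2}⌋ Haar coefficients largest in absolute value, satisfies ‖f - f̃_J‖_n ≤ c V(f) 2^{-J} for all 1 ≤ J ≤ J_n, where c = Σ_{p≥1} p³ 2^{-p/2+1}. -/
open Finset

lemma hblock_mem {m a i : ℕ} (hm : 0 < m) (hi : 1 ≤ i) :
    i ∈ Finset.Ioc (a * m) ((a + 1) * m) ↔ (i - 1) / m = a := by
  rw [Finset.mem_Ioc]
  constructor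
  · rintro ⟨ha, hb⟩
    have h1 : a ≤ (i - 1) / m := (Nat.le_div_iff_mul_le hm).2 (by omega)
    have h2 : (i - 1) / m < a + 1 := (Nat.div_lt_iff_lt_mul hm).2 (by omega)
    omega
  · intro h
    have h1 : a * m ≤ i - 1 := (Nat.le_div_iff_mul_le hm).1 (by omega)
    have h2 : i - 1 < (a + 1) * m := (Nat.div_lt_iff_lt_mul hm).1 (by omega)
    omega

/-- sum of g weighted by block indicator over [1,n] equals sum over the block -/
lemma sum_ind_block {n m a : ℕ} (hm : 0 < m) (hab : (a + 1) * m ≤ n) (g : ℕ → ℝ) :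
    ∑ i ∈ Finset.Icc 1 n, g i * (if (i - 1) / m = a then (1:ℝ) else 0)
      = ∑ i ∈ Finset.Ioc (a * m) ((a + 1) * m), g i := by
  have : ∀ i, g i * (if (i - 1) / m = a then (1:ℝ) else 0)
      = if (i - 1) / m = a then g i else 0 := by
    intro i; split <;> simp
  simp_rw [this]
  rw [← Finset.sum_filter]
  congr 1
  ext i
  simp only [Finset.mem_filter, Finset.mem_Icc, Finset.mem_Ioc]
  constructor
  · rintro ⟨⟨h1, h2⟩, h3⟩
    exact Finset.mem_Ioc.1 ((hblock_mem hm h1).2 h3)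
  · rintro ⟨h1, h2⟩
    have hi : 1 ≤ i := by omega
    exact ⟨⟨hi, le_trans h2 hab⟩, (hblock_mem hm hi).1 (Finset.mem_Ioc.2 ⟨h1, h2⟩)⟩

lemma mem_Icc_succ {A B i : ℕ} : i ∈ Finset.Icc (A+1) B ↔ i ∈ Finset.Ioc A B := by
  simp only [Finset.mem_Icc, Finset.mem_Ioc]; omega

lemma phi_eval {Jn j k i : ℕ} (hm : 0 < 2^(Jn-j)) (hi : 1 ≤ i) {φv : ℝ}
    (hφv : φv = (2:ℝ) ^ (((j:ℝ)-1)/2) *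
      ((if i ∈ Finset.Icc ((2*k+1)*2^(Jn-j)+1) ((2*k+2)*2^(Jn-j)) then (1:ℝ) else 0) -
       (if i ∈ Finset.Icc (2*k*2^(Jn-j)+1) ((2*k+1)*2^(Jn-j)) then (1:ℝ) else 0))) :
    φv = (2:ℝ) ^ (((j:ℝ)-1)/2) *
      ((if (i-1)/2^(Jn-j) = 2*k+1 then (1:ℝ) else 0) -
       (if (i-1)/2^(Jn-j) = 2*k then (1:ℝ) else 0)) := by
  rw [hφv]
  have e1 : (i ∈ Finset.Icc ((2*k+1)*2^(Jn-j)+1) ((2*k+2)*2^(Jn-j))) ↔ ((i-1)/2^(Jn-j) = 2*k+1) := by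
    rw [mem_Icc_succ, show (2*k+2) * 2^(Jn-j) = ((2*k+1)+1) * 2^(Jn-j) by ring]
    exact hblock_mem hm hi
  have e2 : (i ∈ Finset.Icc (2*k*2^(Jn-j)+1) ((2*k+1)*2^(Jn-j))) ↔ ((i-1)/2^(Jn-j) = 2*k) := by
    rw [mem_Icc_succ]
    exact hblock_mem hm hi
  simp only [e1, e2]

lemma two_rpow_half_sq {j : ℕ} (hj : 1 ≤ j) :
    (2:ℝ) ^ (((j:ℝ)-1)/2) * (2:ℝ) ^ (((j:ℝ)-1)/2) = ((2^(j-1) : ℕ) : ℝ) := by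
  rw [← Real.rpow_add (by norm_num)]
  have h : ((j:ℝ)-1)/2 + ((j:ℝ)-1)/2 = ((j - 1 : ℕ) : ℝ) := by
    rw [Nat.cast_sub hj]; push_cast; ring
  rw [h, Real.rpow_natCast]; push_cast; ring

lemma c_expand {Jn j k n : ℕ} (hn : n = 2^Jn) (hj : 1 ≤ j)
    (hk : (2*k+2) * 2^(Jn-j) ≤ n) (g : ℕ → ℝ) (φi : ℕ → ℝ)
    (hφi : ∀ i, 1 ≤ i → φi i = (2:ℝ)^(((j:ℝ)-1)/2) *
      ((if (i-1)/2^(Jn-j) = 2*k+1 then (1:ℝ) else 0) -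
       (if (i-1)/2^(Jn-j) = 2*k then (1:ℝ) else 0))) :
    (1/(n:ℝ)) * ∑ i ∈ Finset.Icc 1 n, g i * φi i
      = (1/(n:ℝ)) * (2:ℝ)^(((j:ℝ)-1)/2) *
        ((∑ i ∈ Finset.Ioc ((2*k+1)*2^(Jn-j)) ((2*k+2)*2^(Jn-j)), g i)
         - ∑ i ∈ Finset.Ioc (2*k*2^(Jn-j)) ((2*k+1)*2^(Jn-j)), g i) := by
  have hm : 0 < 2^(Jn-j) := Nat.pow_pos (by norm_num)
  have hstep : ∀ i ∈ Finset.Icc 1 n, g i * φi i =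
      (2:ℝ)^(((j:ℝ)-1)/2) * (g i * (if (i-1)/2^(Jn-j) = 2*k+1 then (1:ℝ) else 0))
      - (2:ℝ)^(((j:ℝ)-1)/2) * (g i * (if (i-1)/2^(Jn-j) = 2*k then (1:ℝ) else 0)) := by
    intro i hi
    rw [hφi i (Finset.mem_Icc.1 hi).1]; ring
  rw [Finset.sum_congr rfl hstep, Finset.sum_sub_distrib, ← Finset.mul_sum, ← Finset.mul_sum,
    sum_ind_block hm (by linarith [hk] : (2*k+1+1) * 2^(Jn-j) ≤ n) g,
    sum_ind_block hm (by linarith [hk] : (2*k+1) * 2^(Jn-j) ≤ n) g]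
  rw [show (2*k+1+1) * 2^(Jn-j) = (2*k+2) * 2^(Jn-j) by ring]
  ring

noncomputable def blockAvg (g : ℕ → ℝ) (m i : ℕ) : ℝ :=
  (∑ t ∈ Finset.Ioc (((i-1)/m)*m) (((i-1)/m+1)*m), g t) / m

lemma level_sum {Jn j n i : ℕ} (hn : n = 2^Jn) (hj : 1 ≤ j) (hjn : j ≤ Jn)
    (hi1 : 1 ≤ i) (hin : i ≤ n) (g : ℕ → ℝ) (cv : ℕ → ℝ) (φv : ℕ → ℕ → ℝ)
    (hφv : ∀ k i', 1 ≤ i' → φv k i' = (2:ℝ)^(((j:ℝ)-1)/2) *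
      ((if (i'-1)/2^(Jn-j) = 2*k+1 then (1:ℝ) else 0) -
       (if (i'-1)/2^(Jn-j) = 2*k then (1:ℝ) else 0)))
    (hcv : ∀ k, cv k = (1/(n:ℝ)) * ∑ i' ∈ Finset.Icc 1 n, g i' * φv k i') :
    ∑ k ∈ Finset.range (2^(j-1)), cv k * φv k i
      = blockAvg g (2^(Jn-j)) i - blockAvg g (2^(Jn-(j-1))) i := by
  set m := 2^(Jn-j) with hmdef
  have hm : 0 < m := Nat.pow_pos (by norm_num)
  have hMeq : Jn - (j-1) = (Jn - j) + 1 := by omega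
  have hM2 : 2^(Jn-(j-1)) = 2 * m := by rw [hMeq, pow_succ]; ring
  set M := 2^(Jn-(j-1)) with hMdef
  set q := (i-1)/m with hqdef
  set k0 := (i-1)/M with hk0def
  have hq2 : q / 2 = k0 := by
    rw [hqdef, hk0def, Nat.div_div_eq_div_mul, hM2, Nat.mul_comm]
  have hq : q = 2*k0 ∨ q = 2*k0+1 := by omega
  have hnm : 2^(j-1) * M = n := by
    rw [hn, hM2, hmdef, show 2^(j-1) * (2 * 2^(Jn-j)) = 2^(j-1) * 2^(Jn-j) * 2 by ring,
      ← pow_add, ← pow_succ]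
    congr 1
    omega
  have hk0lt : k0 < 2^(j-1) := by
    rw [hk0def]
    apply (Nat.div_lt_iff_lt_mul (by omega : 0 < M)).2
    calc i - 1 < n := by omega
    _ = 2^(j-1) * M := hnm.symm
  rw [Finset.sum_eq_single_of_mem k0 (Finset.mem_range.2 hk0lt)
    (fun k hk hne => by
      rw [hφv k i hi1, if_neg (by omega), if_neg (by omega)]
      simp)]
  rw [hcv k0]
  have hk2 : (2*k0+2) * m ≤ n := by
    calc (2*k0+2) * m = (k0+1) * M := by rw [hM2]; ring
    _ ≤ 2^(j-1) * M := Nat.mul_le_mul_right _ hk0lt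
    _ = n := hnm
  rw [c_expand hn hj hk2 g (φv k0) (fun i' hi' => hφv k0 i' hi'), hφv k0 i hi1]
  set SR := ∑ t ∈ Finset.Ioc ((2*k0+1)*m) ((2*k0+2)*m), g t with hSR
  set SL := ∑ t ∈ Finset.Ioc (2*k0*m) ((2*k0+1)*m), g t with hSL
  have hle1 : 2*k0*m ≤ (2*k0+1)*m := Nat.mul_le_mul_right _ (by omega)
  have hle2 : (2*k0+1)*m ≤ (2*k0+2)*m := Nat.mul_le_mul_right _ (by omega)
  have havgM : blockAvg g M i = (SL + SR) / M := by
    rw [blockAvg, ← hk0def,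
      show k0 * M = 2*k0*m by rw [hM2]; ring,
      show (k0+1) * M = (2*k0+2)*m by rw [hM2]; ring,
      ← Finset.sum_Ioc_consecutive g hle1 hle2]
  have hnR : (n:ℝ) = ((2^(j-1) : ℕ):ℝ) * (M:ℝ) := by
    rw [← hnm]; push_cast; ring
  have hMR : (M:ℝ) = 2*(m:ℝ) := by rw [hM2]; push_cast; ring
  have hmne : (m:ℝ) ≠ 0 := Nat.cast_ne_zero.2 (by omega)
  have hane : ((2^(j-1) : ℕ):ℝ) ≠ 0 := Nat.cast_ne_zero.2 (by positivity)
  have hnne : (n:ℝ) ≠ 0 := by rw [hnR, hMR]; positivity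
  rcases hq with h | h
  · have havgm : blockAvg g m i = SL / m := by
      rw [blockAvg, ← hqdef, h]
    rw [if_neg (by omega), if_pos h, havgm, havgM]
    have hL : (1/(n:ℝ)) * (2:ℝ)^(((j:ℝ)-1)/2) * (SR - SL) *
        ((2:ℝ)^(((j:ℝ)-1)/2) * ((0:ℝ) - 1)) = ((2^(j-1):ℕ):ℝ) * (SL - SR) / n := by
      rw [← two_rpow_half_sq hj]; ring
    rw [hL, hnR, hMR]
    field_simp
    ring
  · have havgm : blockAvg g m i = SR / m := by
      rw [blockAvg, ← hqdef, h,
        show (2*k0+1+1)*m = (2*k0+2)*m by ring]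
    rw [if_pos h, if_neg (by omega), havgm, havgM]
    have hL : (1/(n:ℝ)) * (2:ℝ)^(((j:ℝ)-1)/2) * (SR - SL) *
        ((2:ℝ)^(((j:ℝ)-1)/2) * ((1:ℝ) - 0)) = ((2^(j-1):ℕ):ℝ) * (SR - SL) / n := by
      rw [← two_rpow_half_sq hj]; ring
    rw [hL, hnR, hMR]
    field_simp
    ring

lemma recon {Jn n : ℕ} (hn : n = 2^Jn) (g : ℕ → ℝ)
    (φ : ℕ → ℕ → ℕ → ℝ) (hφ0 : ∀ i : ℕ, φ 0 0 i = 1)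
    (hφ : ∀ j k i : ℕ, 1 ≤ j →
      φ j k i = (2 : ℝ) ^ (((j : ℝ) - 1) / 2) *
        ((if i ∈ Finset.Icc ((2 * k + 1) * 2 ^ (Jn - j) + 1) ((2 * k + 2) * 2 ^ (Jn - j))
            then (1 : ℝ) else 0) -
          (if i ∈ Finset.Icc (2 * k * 2 ^ (Jn - j) + 1) ((2 * k + 1) * 2 ^ (Jn - j))
            then (1 : ℝ) else 0)))
    (c : ℕ → ℕ → ℝ)
    (hc : ∀ j k : ℕ, c j k = (1 / (n : ℝ)) * ∑ i ∈ Finset.Icc 1 n, g i * φ j k i)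
    {i : ℕ} (hi1 : 1 ≤ i) (hin : i ≤ n) :
    ∑ j ∈ Finset.range (Jn+1), ∑ k ∈ Finset.range (2^(j-1)), c j k * φ j k i = g i := by
  have hn1 : 1 ≤ n := by rw [hn]; exact Nat.one_le_two_pow
  set B : ℕ → ℝ := fun j => blockAvg g (2^(Jn-j)) i with hB
  have hIccIoc : Finset.Icc 1 n = Finset.Ioc 0 n := by
    ext t; simp only [Finset.mem_Icc, Finset.mem_Ioc]; omega
  have hlev : ∀ j ∈ Finset.range Jn,
      ∑ k ∈ Finset.range (2^(j+1-1)), c (j+1) k * φ (j+1) k i = B (j+1) - B j := by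
    intro j hj
    have hj1 : 1 ≤ j + 1 := by omega
    have hjn : j + 1 ≤ Jn := by simpa using Finset.mem_range.1 hj
    have hφv : ∀ k i' : ℕ, 1 ≤ i' → φ (j+1) k i' = (2:ℝ)^((((j+1:ℕ):ℝ)-1)/2) *
        ((if (i'-1)/2^(Jn-(j+1)) = 2*k+1 then (1:ℝ) else 0) -
         (if (i'-1)/2^(Jn-(j+1)) = 2*k then (1:ℝ) else 0)) := by
      intro k i' hi'
      exact phi_eval (Nat.pow_pos (by norm_num)) hi' (hφ (j+1) k i' hj1)
    have := level_sum hn hj1 hjn hi1 hin g (c (j+1)) (φ (j+1)) hφv (fun k => hc (j+1) k)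
    rw [this, hB]
    simp only [Nat.add_sub_cancel]
  rw [Finset.sum_range_succ', Finset.sum_congr rfl hlev, Finset.sum_range_sub (f := B)]
  have hF0 : ∑ k ∈ Finset.range (2^(0-1)), c 0 k * φ 0 k i = B 0 := by
    norm_num
    rw [hc 0 0, hφ0 i, mul_one, hB]
    simp only [blockAvg, Nat.sub_zero, ← hn]
    rw [Nat.div_eq_of_lt (by omega), Nat.zero_mul, Nat.zero_add, Nat.one_mul, ← hIccIoc]
    rw [Finset.sum_congr rfl (fun i' _ => by rw [hφ0 i', mul_one])]
    ring
  rw [hF0]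
  have hBJn : B Jn = g i := by
    rw [hB]
    simp only [Nat.sub_self, pow_zero, blockAvg, Nat.div_one, Nat.mul_one, Nat.cast_one, div_one]
    rw [show Finset.Ioc (i-1) (i-1+1) = {i} by ext t; simp only [Finset.mem_Ioc, Finset.mem_singleton]; omega,
      Finset.sum_singleton]
  rw [hBJn]; ring

lemma level_norm {Jn j n : ℕ} (hn : n = 2^Jn) (hj : 1 ≤ j) (hjn : j ≤ Jn)
    (a : ℕ → ℝ) (φv : ℕ → ℕ → ℝ)
    (hφv : ∀ k i', 1 ≤ i' → φv k i' = (2:ℝ)^(((j:ℝ)-1)/2) *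
      ((if (i'-1)/2^(Jn-j) = 2*k+1 then (1:ℝ) else 0) -
       (if (i'-1)/2^(Jn-j) = 2*k then (1:ℝ) else 0)))
    (B : Finset ℕ) (hBs : B ⊆ Finset.range (2^(j-1))) :
    (1/(n:ℝ)) * ∑ i ∈ Finset.Icc 1 n, (∑ k ∈ B, a k * φv k i)^2 = ∑ k ∈ B, (a k)^2 := by
  set m := 2^(Jn-j) with hmdef
  have hm : 0 < m := Nat.pow_pos (by norm_num)
  have hnm : 2^(j-1) * (2*m) = n := by
    rw [hn, hmdef, show 2^(j-1) * (2 * 2^(Jn-j)) = 2^(j-1) * 2^(Jn-j) * 2 by ring,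
      ← pow_add, ← pow_succ]
    congr 1
    omega
  have hnne : (n:ℝ) ≠ 0 := by rw [hn]; positivity
  -- Step A : pointwise diagonalization
  have hdiag : ∀ i ∈ Finset.Icc 1 n,
      (∑ k ∈ B, a k * φv k i)^2 = ∑ k ∈ B, (a k)^2 * (φv k i)^2 := by
    intro i hi
    have hi1 : 1 ≤ i := (Finset.mem_Icc.1 hi).1
    rw [pow_two, Finset.sum_mul_sum]
    rw [Finset.sum_congr rfl (fun k hk => Finset.sum_eq_single_of_mem k hk
      (fun k' hk' hne => by
        have : φv k i * φv k' i = 0 := by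
          rw [hφv k i hi1, hφv k' i hi1]
          split_ifs <;> first | omega | ring
        calc a k * φv k i * (a k' * φv k' i) = a k * a k' * (φv k i * φv k' i) := by ring
        _ = 0 := by rw [this, mul_zero]))]
    exact Finset.sum_congr rfl (fun k _ => by ring)
  -- Step B : column sums
  have hcol : ∀ k ∈ B, ∑ i ∈ Finset.Icc 1 n, (φv k i)^2 = (n:ℝ) := by
    intro k hk
    have hklt : k < 2^(j-1) := Finset.mem_range.1 (hBs hk)
    have hk2 : (2*k+2) * m ≤ n := by
      calc (2*k+2) * m = (k+1) * (2*m) := by ring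
      _ ≤ 2^(j-1) * (2*m) := Nat.mul_le_mul_right _ hklt
      _ = n := hnm
    have hpt : ∀ i ∈ Finset.Icc 1 n, (φv k i)^2 =
        ((2^(j-1):ℕ):ℝ) * ((1:ℝ) * (if (i-1)/m = 2*k+1 then (1:ℝ) else 0)
          + (1:ℝ) * (if (i-1)/m = 2*k then (1:ℝ) else 0)) := by
      intro i hi
      rw [hφv k i (Finset.mem_Icc.1 hi).1]
      split_ifs <;> first | omega | (rw [← two_rpow_half_sq hj]; ring)
    rw [Finset.sum_congr rfl hpt, ← Finset.mul_sum, Finset.sum_add_distrib,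
      sum_ind_block hm (show (2*k+1+1) * m ≤ n by
        rw [show (2*k+1+1)*m = (2*k+2)*m by ring]; exact hk2) (fun _ => (1:ℝ)),
      sum_ind_block hm (le_trans (Nat.mul_le_mul_right _ (show 2*k+1 ≤ 2*k+2 by omega)) hk2)
        (fun _ => (1:ℝ)),
      Finset.sum_const, Finset.sum_const, Nat.card_Ioc, Nat.card_Ioc]
    have e1 : (2*k+1+1) * m - (2*k+1) * m = m := by
      have : (2*k+1+1) * m = (2*k+1) * m + m := by ring
      omega
    have e2 : (2*k+1) * m - 2*k*m = m := by
      have : (2*k+1) * m = 2*k*m + m := by ring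
      omega
    rw [e1, e2, ← hnm]
    push_cast [hmdef]
    ring
  -- combine
  rw [Finset.sum_congr rfl hdiag, Finset.sum_comm]
  have hfin : ∀ k ∈ B, ∑ i ∈ Finset.Icc 1 n, (a k)^2 * (φv k i)^2 = (a k)^2 * (n:ℝ) := by
    intro k hk
    rw [← Finset.mul_sum, hcol k hk]
  rw [Finset.sum_congr rfl hfin, ← Finset.sum_mul]
  field_simp

lemma evar_chain (f : ℝ → ℝ) (I : ℕ → Set ℝ) :
    ∀ K : ℕ, (∀ k k', k < k' → k' < K → ∀ u ∈ I k, ∀ v ∈ I k', u ≤ v) →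
    ∑ k ∈ Finset.range K, eVariationOn f (I k)
      ≤ eVariationOn f (⋃ k ∈ Finset.range K, I k) := by
  intro K
  induction K with
  | zero => simp
  | succ K ih =>
    intro horder
    rw [Finset.sum_range_succ]
    have h1 := ih (fun k k' h1 h2 => horder k k' h1 (by omega))
    have h2 : eVariationOn f (⋃ k ∈ Finset.range K, I k) + eVariationOn f (I K)
        ≤ eVariationOn f ((⋃ k ∈ Finset.range K, I k) ∪ I K) := by
      apply eVariationOn.add_le_union
      intro u hu v hv
      rw [Set.mem_iUnion₂] at hu
      obtain ⟨k, hk, hu⟩ := hu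
      exact horder k K (Finset.mem_range.1 hk) (by omega) u hu v hv
    have h3 : ((⋃ k ∈ Finset.range K, I k) ∪ I K) = ⋃ k ∈ Finset.range (K+1), I k := by
      rw [Finset.range_add_one]
      simp [Set.biUnion_insert, Set.union_comm]
    calc ∑ k ∈ Finset.range K, eVariationOn f (I k) + eVariationOn f (I K)
        ≤ eVariationOn f (⋃ k ∈ Finset.range K, I k) + eVariationOn f (I K) :=
          add_le_add h1 le_rfl
    _ ≤ _ := by rw [← h3]; exact h2

lemma blocks_var {n KK : ℕ} (x : ℕ → ℝ)
    (hxmono : ∀ i j : ℕ, 1 ≤ i → i < j → j ≤ n → x i < x j)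
    (hxrange : ∀ i : ℕ, 1 ≤ i → i ≤ n → x i ∈ Set.Icc (0 : ℝ) 1)
    (f : ℝ → ℝ) (hf : BoundedVariationOn f (Set.Icc 0 1))
    (m : ℕ) (hm : 0 < m) (hKK : 2*KK*m ≤ n) :
    ∑ k ∈ Finset.range KK,
      (eVariationOn f (Set.Icc (x (2*k*m+1)) (x ((2*k+2)*m)))).toReal
      ≤ (eVariationOn f (Set.Icc (0:ℝ) 1)).toReal := by
  have hxle : ∀ a b : ℕ, 1 ≤ a → a ≤ b → b ≤ n → x a ≤ x b := by
    intro a b h1 h2 h3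
    rcases eq_or_lt_of_le h2 with h | h
    · rw [h]
    · exact le_of_lt (hxmono a b h1 h h3)
  set I : ℕ → Set ℝ := fun k => Set.Icc (x (2*k*m+1)) (x ((2*k+2)*m)) with hI
  have hidx : ∀ k, k < KK → 2*k*m+1 ≤ n ∧ (2*k+2)*m ≤ n := by
    intro k hk
    constructor
    · have e1 : (2*k+2)*m ≤ 2*KK*m := Nat.mul_le_mul_right _ (by omega)
      have e2 : 2*k*m + 2*m = (2*k+2)*m := by ring
      omega
    · calc (2*k+2)*m ≤ 2*KK*m := Nat.mul_le_mul_right _ (by omega)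
      _ ≤ n := hKK
  have hIS : ∀ k, k < KK → I k ⊆ Set.Icc (0:ℝ) 1 := by
    intro k hk
    obtain ⟨h1, h2⟩ := hidx k hk
    have e1 : 0 < (2*k+2)*m := Nat.mul_pos (by omega) hm
    exact Set.Icc_subset_Icc (hxrange _ (by omega) (by omega)).1 (hxrange _ (by omega) (by omega)).2
  have horder : ∀ k k', k < k' → k' < KK → ∀ u ∈ I k, ∀ v ∈ I k', u ≤ v := by
    intro k k' h1 h2 u hu v hv
    obtain ⟨hk1, hk2⟩ := hidx k (by omega)
    obtain ⟨hk1', hk2'⟩ := hidx k' h2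
    have e1 : 0 < (2*k+2)*m := Nat.mul_pos (by omega) hm
    have hmid : x ((2*k+2)*m) ≤ x (2*k'*m+1) := by
      apply hxle _ _ (by omega) _ hk1'
      have : (2*k+2)*m ≤ 2*k'*m := Nat.mul_le_mul_right _ (by omega)
      omega
    exact le_trans hu.2 (le_trans hmid hv.1)
  have hchain := evar_chain f I KK horder
  have hU : (⋃ k ∈ Finset.range KK, I k) ⊆ Set.Icc (0:ℝ) 1 := by
    intro u hu
    rw [Set.mem_iUnion₂] at hu
    obtain ⟨k, hk, hu⟩ := hu
    exact hIS k (Finset.mem_range.1 hk) hu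
  have hle : ∑ k ∈ Finset.range KK, eVariationOn f (I k) ≤ eVariationOn f (Set.Icc (0:ℝ) 1) :=
    le_trans hchain (eVariationOn.mono f hU)
  have hne : ∀ k ∈ Finset.range KK, eVariationOn f (I k) ≠ ⊤ := by
    intro k hk
    exact hf.mono (hIS k (Finset.mem_range.1 hk))
  calc ∑ k ∈ Finset.range KK, (eVariationOn f (I k)).toReal
      = (∑ k ∈ Finset.range KK, eVariationOn f (I k)).toReal := (ENNReal.toReal_sum hne).symm
  _ ≤ _ := ENNReal.toReal_mono hf hle

lemma coef_l1 {Jn j n : ℕ} (hn : n = 2^Jn) (hj : 1 ≤ j) (hjn : j ≤ Jn)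
    (x : ℕ → ℝ)
    (hxmono : ∀ i j : ℕ, 1 ≤ i → i < j → j ≤ n → x i < x j)
    (hxrange : ∀ i : ℕ, 1 ≤ i → i ≤ n → x i ∈ Set.Icc (0 : ℝ) 1)
    (f : ℝ → ℝ) (hf : BoundedVariationOn f (Set.Icc 0 1))
    (cv : ℕ → ℝ) (φv : ℕ → ℕ → ℝ)
    (hφv : ∀ k i', 1 ≤ i' → φv k i' = (2:ℝ)^(((j:ℝ)-1)/2) *
      ((if (i'-1)/2^(Jn-j) = 2*k+1 then (1:ℝ) else 0) -
       (if (i'-1)/2^(Jn-j) = 2*k then (1:ℝ) else 0)))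
    (hcv : ∀ k, cv k = (1/(n:ℝ)) * ∑ i ∈ Finset.Icc 1 n, f (x i) * φv k i) :
    ∑ k ∈ Finset.range (2^(j-1)), |cv k|
      ≤ (2:ℝ)^(-((j:ℝ)+1)/2) * (eVariationOn f (Set.Icc (0:ℝ) 1)).toReal := by
  set m := 2^(Jn-j) with hmdef
  have hm : 0 < m := Nat.pow_pos (by norm_num)
  have hnm : 2^(j-1) * (2*m) = n := by
    rw [hn, hmdef, show 2^(j-1) * (2 * 2^(Jn-j)) = 2^(j-1) * 2^(Jn-j) * 2 by ring,
      ← pow_add, ← pow_succ]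
    congr 1
    omega
  have hn0 : 0 < n := by
    rw [hn]; exact Nat.pow_pos (by norm_num)
  have hxle : ∀ a b : ℕ, 1 ≤ a → a ≤ b → b ≤ n → x a ≤ x b := by
    intro a b h1 h2 h3
    rcases eq_or_lt_of_le h2 with h | h
    · rw [h]
    · exact le_of_lt (hxmono a b h1 h h3)
  set C : ℝ := (1/(n:ℝ)) * (2:ℝ)^(((j:ℝ)-1)/2) * m with hC
  have hC0 : 0 ≤ C := by positivity
  set I : ℕ → Set ℝ := fun k => Set.Icc (x (2*k*m+1)) (x ((2*k+2)*m)) with hI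
  have hck : ∀ k ∈ Finset.range (2^(j-1)),
      |cv k| ≤ C * (eVariationOn f (I k)).toReal := by
    intro k hk
    have hklt : k < 2^(j-1) := Finset.mem_range.1 hk
    have hk2 : (2*k+2) * m ≤ n := by
      calc (2*k+2) * m = (k+1) * (2*m) := by ring
      _ ≤ 2^(j-1) * (2*m) := Nat.mul_le_mul_right _ hklt
      _ = n := hnm
    have hidx1 : 2*k*m + 2*m = (2*k+2)*m := by ring
    have hidx2 : 2*k*m + m = (2*k+1)*m := by ring
    have hIsub : I k ⊆ Set.Icc (0:ℝ) 1 :=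
      Set.Icc_subset_Icc (hxrange _ (by omega) (by omega)).1 (hxrange _ (by omega) (by omega)).2
    have hbv : BoundedVariationOn f (I k) := hf.mono hIsub
    rw [hcv k, c_expand hn hj hk2 (fun i => f (x i)) (φv k) (hφv k)]
    have hmap : ∑ i ∈ Finset.Ioc (m + 2*k*m) (m + ((2*k+1)*m)), f (x i)
        = ∑ t ∈ Finset.Ioc (2*k*m) ((2*k+1)*m), f (x (m + t)) := by
      rw [← Finset.map_add_left_Ioc, Finset.sum_map]
      simp [addLeftEmbedding_apply]
    rw [show Finset.Ioc ((2*k+1)*m) ((2*k+2)*m) = Finset.Ioc (m + 2*k*m) (m + ((2*k+1)*m)) by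
        congr 1 <;> ring,
      hmap, ← Finset.sum_sub_distrib]
    have habs : |∑ t ∈ Finset.Ioc (2*k*m) ((2*k+1)*m), (f (x (m+t)) - f (x t))|
        ≤ ∑ t ∈ Finset.Ioc (2*k*m) ((2*k+1)*m), |f (x (m+t)) - f (x t)| :=
      Finset.abs_sum_le_sum_abs _ _
    have hterm : ∀ t ∈ Finset.Ioc (2*k*m) ((2*k+1)*m),
        |f (x (m+t)) - f (x t)| ≤ (eVariationOn f (I k)).toReal := by
      intro t ht
      obtain ⟨ht1, ht2⟩ := Finset.mem_Ioc.1 ht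
      have hxt : x t ∈ I k := ⟨hxle _ _ (by omega) (by omega) (by omega),
        hxle _ _ (by omega) (by omega) (by omega)⟩
      have hxmt : x (m+t) ∈ I k := ⟨hxle _ _ (by omega) (by omega) (by omega),
        hxle _ _ (by omega) (by omega) (by omega)⟩
      rw [← Real.dist_eq]
      exact hbv.dist_le hxmt hxt
    have hsum : ∑ t ∈ Finset.Ioc (2*k*m) ((2*k+1)*m), |f (x (m+t)) - f (x t)|
        ≤ (m:ℝ) * (eVariationOn f (I k)).toReal := by
      calc ∑ t ∈ Finset.Ioc (2*k*m) ((2*k+1)*m), |f (x (m+t)) - f (x t)|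
          ≤ ∑ t ∈ Finset.Ioc (2*k*m) ((2*k+1)*m), (eVariationOn f (I k)).toReal :=
            Finset.sum_le_sum hterm
      _ = (m:ℝ) * (eVariationOn f (I k)).toReal := by
          rw [Finset.sum_const, Nat.card_Ioc, show (2*k+1)*m - 2*k*m = m by omega,
            nsmul_eq_mul]
    rw [abs_mul, abs_mul]
    have h2x : |(2:ℝ)^(((j:ℝ)-1)/2)| = (2:ℝ)^(((j:ℝ)-1)/2) := abs_of_pos (by positivity)
    have h1n : |1/(n:ℝ)| = 1/(n:ℝ) := abs_of_pos (by positivity)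
    rw [h2x, h1n, hC]
    calc 1/(n:ℝ) * (2:ℝ)^(((j:ℝ)-1)/2) * |_| ≤ 1/(n:ℝ) * (2:ℝ)^(((j:ℝ)-1)/2) *
        ((m:ℝ) * (eVariationOn f (I k)).toReal) := by
          apply mul_le_mul_of_nonneg_left (le_trans habs hsum) (by positivity)
    _ = 1/(n:ℝ) * (2:ℝ)^(((j:ℝ)-1)/2) * m * (eVariationOn f (I k)).toReal := by ring
  have hKK : 2*2^(j-1)*m ≤ n := by
    rw [show 2*2^(j-1)*m = 2^(j-1)*(2*m) by ring]
    omega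
  have hblocks := blocks_var x hxmono hxrange f hf m hm hKK
  have hCfinal : C = (2:ℝ)^(-((j:ℝ)+1)/2) := by
    rw [hC]
    have hmn : (m:ℝ)/(n:ℝ) = (2:ℝ)^(-(j:ℝ)) := by
      rw [hn, hmdef]
      push_cast
      rw [← Real.rpow_natCast 2 (Jn-j), ← Real.rpow_natCast 2 Jn,
        ← Real.rpow_sub (by norm_num)]
      congr 1
      rw [Nat.cast_sub hjn]
      ring
    have : (1:ℝ)/(n:ℝ) * (2:ℝ)^(((j:ℝ)-1)/2) * m = (m:ℝ)/(n:ℝ) * (2:ℝ)^(((j:ℝ)-1)/2) := by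
      ring
    rw [this, hmn, ← Real.rpow_add (by norm_num)]
    congr 1
    ring
  calc ∑ k ∈ Finset.range (2^(j-1)), |cv k|
      ≤ ∑ k ∈ Finset.range (2^(j-1)), C * (eVariationOn f (I k)).toReal :=
        Finset.sum_le_sum hck
  _ = C * ∑ k ∈ Finset.range (2^(j-1)), (eVariationOn f (I k)).toReal := by
        rw [Finset.mul_sum]
  _ ≤ C * (eVariationOn f (Set.Icc (0:ℝ) 1)).toReal :=
        mul_le_mul_of_nonneg_left hblocks hC0
  _ = _ := by rw [hCfinal]

lemma minkowski_fin {N : ℕ} (s : Finset ℕ) (h : ℕ → Fin N → ℝ) :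
    Real.sqrt (∑ i : Fin N, (∑ j ∈ s, h j i)^2)
      ≤ ∑ j ∈ s, Real.sqrt (∑ i : Fin N, (h j i)^2) := by
  have key : ∀ g : EuclideanSpace ℝ (Fin N), ‖g‖ = Real.sqrt (∑ i, (g i)^2) := by
    intro g
    rw [EuclideanSpace.norm_eq]
    congr 1
    exact Finset.sum_congr rfl fun i _ => by rw [Real.norm_eq_abs, sq_abs]
  set v : ℕ → EuclideanSpace ℝ (Fin N) := fun j => WithLp.toLp 2 (fun i => h j i : Fin N → ℝ) with hv
  have h1 : Real.sqrt (∑ i : Fin N, (∑ j ∈ s, h j i)^2) = ‖∑ j ∈ s, v j‖ := by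
    rw [key]
    congr 1
    refine Finset.sum_congr rfl fun i _ => ?_
    congr 1
    rw [WithLp.ofLp_sum, Finset.sum_apply]
  rw [h1]
  calc ‖∑ j ∈ s, v j‖ ≤ ∑ j ∈ s, ‖v j‖ := norm_sum_le s v
  _ = _ := Finset.sum_congr rfl fun j _ => by rw [key]

lemma summable_C : Summable (fun p : ℕ => ((p:ℝ)+1)^3 * (2:ℝ)^(-((p:ℝ)+1)/2 + 1)) := by
  set r : ℝ := (2:ℝ)^(-(1:ℝ)/2) with hrdef
  have hr0 : 0 < r := Real.rpow_pos_of_pos (by norm_num) _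
  have hr1 : r < 1 := Real.rpow_lt_one_of_one_lt_of_neg (by norm_num) (by norm_num)
  have h0 : Summable (fun q : ℕ => (q:ℝ)^3 * r^q) :=
    summable_pow_mul_geometric_of_norm_lt_one 3
      (by rw [Real.norm_eq_abs, abs_of_pos hr0]; exact hr1)
  have h1 : Summable (fun p : ℕ => ((p+1:ℕ):ℝ)^3 * r^(p+1)) :=
    (summable_nat_add_iff 1).2 h0
  apply Summable.congr (h1.mul_left 2)
  intro p
  have hrp : r^(p+1) = (2:ℝ)^(-((p:ℝ)+1)/2) := by
    rw [hrdef, ← Real.rpow_natCast ((2:ℝ)^(-(1:ℝ)/2)) (p+1),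
      ← Real.rpow_mul (by norm_num : (0:ℝ) ≤ 2)]
    congr 1
    push_cast
    ring
  rw [hrp, show (-((p:ℝ)+1)/2 + 1) = (-((p:ℝ)+1)/2) + 1 by ring,
    Real.rpow_add (by norm_num), Real.rpow_one]
  push_cast
  ring

lemma compress_bound (cc : ℕ → ℝ) (S A : Finset ℕ) (hA : A ⊆ S)
    (hmax : ∀ k ∈ A, ∀ k' ∈ S \ A, |cc k'| ≤ |cc k|) :
    ∑ k ∈ S \ A, (cc k)^2 ≤ (∑ k ∈ S, |cc k|)^2 / ((A.card : ℝ) + 1) := by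
  set Sall := ∑ k ∈ S, |cc k| with hSall
  have hS0 : 0 ≤ Sall := Finset.sum_nonneg (fun _ _ => abs_nonneg _)
  have hKc : (0:ℝ) < (A.card : ℝ) + 1 := by positivity
  have hmax' : ∀ k' ∈ S \ A, ((A.card : ℝ) + 1) * |cc k'| ≤ Sall := by
    intro k' hk'
    have h1 : (A.card:ℝ) * |cc k'| ≤ ∑ k ∈ A, |cc k| := by
      rw [← nsmul_eq_mul]
      exact Finset.card_nsmul_le_sum A _ _ (fun k hk => hmax k hk k' hk')
    have h2 : |cc k'| ≤ ∑ k ∈ S \ A, |cc k| :=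
      Finset.single_le_sum (f := fun k => |cc k|) (fun _ _ => abs_nonneg _) hk'
    have h3 : ∑ k ∈ S \ A, |cc k| + ∑ k ∈ A, |cc k| = Sall := Finset.sum_sdiff hA
    nlinarith
  have hstep : ∀ k ∈ S \ A, (cc k)^2 ≤ (Sall / ((A.card:ℝ)+1)) * |cc k| := by
    intro k hk
    have h1 : |cc k| ≤ Sall / ((A.card:ℝ)+1) := by
      rw [le_div_iff₀ hKc]
      linarith [hmax' k hk]
    calc (cc k)^2 = |cc k| * |cc k| := by rw [← sq_abs, pow_two]
    _ ≤ (Sall / ((A.card:ℝ)+1)) * |cc k| :=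
        mul_le_mul_of_nonneg_right h1 (abs_nonneg _)
  calc ∑ k ∈ S \ A, (cc k)^2 ≤ ∑ k ∈ S \ A, (Sall / ((A.card:ℝ)+1)) * |cc k| :=
        Finset.sum_le_sum hstep
  _ = (Sall / ((A.card:ℝ)+1)) * ∑ k ∈ S \ A, |cc k| := by rw [Finset.mul_sum]
  _ ≤ (Sall / ((A.card:ℝ)+1)) * Sall := by
      apply mul_le_mul_of_nonneg_left _ (by positivity)
      exact Finset.sum_le_sum_of_subset_of_nonneg (Finset.sdiff_subset)
        (fun _ _ _ => abs_nonneg _)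
  _ = Sall^2 / ((A.card:ℝ)+1) := by ring

lemma Dsq_bound {J j Kj : ℕ} (hJj : J ≤ j) (V : ℝ) (hV : 0 ≤ V)
    (hKj : Kj = ⌊(2:ℝ)^((J:ℝ)-2) / (((j:ℝ) - (J:ℝ) + 1)^3)⌋₊) :
    ((2:ℝ)^(-((j:ℝ)+1)/2) * V)^2 / ((Kj:ℝ)+1)
      ≤ ((((j-J:ℕ):ℝ)+1)^3 * (2:ℝ)^(-(((j-J:ℕ):ℝ)+1)/2+1) * V * (2:ℝ)^(-(J:ℝ)))^2 := by
  have h2pos : (0:ℝ) < 2 := by norm_num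
  set p : ℝ := ((j-J:ℕ):ℝ) with hp
  have hpe : (j:ℝ) - (J:ℝ) = p := by rw [hp, Nat.cast_sub hJj]
  have hp0 : 0 ≤ p := Nat.cast_nonneg _
  have hyK : (2:ℝ)^((J:ℝ)-2) / ((p+1)^3) < (Kj:ℝ) + 1 := by
    rw [hKj, hpe]
    exact Nat.lt_floor_add_one _
  have hinv : 1/((Kj:ℝ)+1) ≤ (p+1)^3 / (2:ℝ)^((J:ℝ)-2) := by
    rw [div_le_div_iff₀ (by positivity) (by positivity)]
    have h1 := (div_lt_iff₀ (by positivity : (0:ℝ) < (p+1)^3)).1 hyK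
    nlinarith [Real.rpow_pos_of_pos h2pos ((J:ℝ)-2)]
  have key : ((2:ℝ)^(-((j:ℝ)+1)/2) * V)^2 / ((Kj:ℝ)+1)
      ≤ ((2:ℝ)^(-((j:ℝ)+1)/2) * V)^2 * ((p+1)^3 / (2:ℝ)^((J:ℝ)-2)) := by
    rw [div_eq_mul_one_div]
    exact mul_le_mul_of_nonneg_left hinv (by positivity)
  refine le_trans key ?_
  have hmono : ((p+1)^3 : ℝ) ≤ (p+1)^6 := by
    apply pow_le_pow_right₀ (by linarith) (by norm_num)
  calc ((2:ℝ)^(-((j:ℝ)+1)/2) * V)^2 * ((p+1)^3 / (2:ℝ)^((J:ℝ)-2))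
      = (2:ℝ)^(-((j:ℝ)+1)/2 + -((j:ℝ)+1)/2 + -((J:ℝ)-2)) * ((p+1)^3 * V^2) := by
        rw [Real.rpow_add h2pos (-((j:ℝ)+1)/2 + -((j:ℝ)+1)/2) (-((J:ℝ)-2)),
          Real.rpow_add h2pos (-((j:ℝ)+1)/2) (-((j:ℝ)+1)/2),
          Real.rpow_neg (le_of_lt h2pos) ((J:ℝ)-2)]
        ring
  _ = (2:ℝ)^((-(p+1)/2+1) + (-(p+1)/2+1) + (-(J:ℝ) + -(J:ℝ))) * ((p+1)^3 * V^2) := by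
        rw [show (-((j:ℝ)+1)/2 + -((j:ℝ)+1)/2 + -((J:ℝ)-2))
            = ((-(p+1)/2+1) + (-(p+1)/2+1) + (-(J:ℝ) + -(J:ℝ))) by rw [← hpe]; ring]
  _ ≤ (2:ℝ)^((-(p+1)/2+1) + (-(p+1)/2+1) + (-(J:ℝ) + -(J:ℝ))) * ((p+1)^6 * V^2) := by
        apply mul_le_mul_of_nonneg_left _ (by positivity)
        exact mul_le_mul_of_nonneg_right hmono (by positivity)
  _ = (((p:ℝ)+1)^3 * (2:ℝ)^(-(p+1)/2+1) * V * (2:ℝ)^(-(J:ℝ)))^2 := by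
        rw [Real.rpow_add h2pos ((-(p+1)/2+1) + (-(p+1)/2+1)) (-(J:ℝ) + -(J:ℝ)),
          Real.rpow_add h2pos (-(p+1)/2+1) (-(p+1)/2+1),
          Real.rpow_add h2pos (-(J:ℝ)) (-(J:ℝ))]
        ring

/-- Nonlinear (compressed) Haar approximation bound for bounded-variation functions. -/
theorem haar_nonlinear_approximation_BV
    (Jn : ℕ) (hJn : 1 ≤ Jn) (n : ℕ) (hn : n = 2 ^ Jn)
    (x : ℕ → ℝ) (hx0 : x 1 = 0) (hxlt : x n < 1)
    (hxmono : ∀ i j : ℕ, 1 ≤ i → i < j → j ≤ n → x i < x j)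
    (hxrange : ∀ i : ℕ, 1 ≤ i → i ≤ n → x i ∈ Set.Icc (0 : ℝ) 1)
    (f : ℝ → ℝ) (hf : BoundedVariationOn f (Set.Icc 0 1))
    (φ : ℕ → ℕ → ℕ → ℝ)
    (hφ0 : ∀ i : ℕ, φ 0 0 i = 1)
    (hφ : ∀ j k i : ℕ, 1 ≤ j →
      φ j k i = (2 : ℝ) ^ (((j : ℝ) - 1) / 2) *
        ((if i ∈ Finset.Icc ((2 * k + 1) * 2 ^ (Jn - j) + 1) ((2 * k + 2) * 2 ^ (Jn - j))
            then (1 : ℝ) else 0) -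
          (if i ∈ Finset.Icc (2 * k * 2 ^ (Jn - j) + 1) ((2 * k + 1) * 2 ^ (Jn - j))
            then (1 : ℝ) else 0)))
    (c : ℕ → ℕ → ℝ)
    (hc : ∀ j k : ℕ, c j k = (1 / (n : ℝ)) * ∑ i ∈ Finset.Icc 1 n, f (x i) * φ j k i)
    (J : ℕ) (hJ1 : 1 ≤ J) (hJ : J ≤ Jn)
    (K : ℕ → ℕ)
    (hK : ∀ j : ℕ, K j = ⌊(2 : ℝ) ^ ((J : ℝ) - 2) / ((j : ℝ) - J + 1) ^ 3⌋₊)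
    (A : ℕ → Finset ℕ)
    (hAsub : ∀ j : ℕ, J ≤ j → j ≤ Jn → A j ⊆ Finset.range (2 ^ (j - 1)))
    (hAcard : ∀ j : ℕ, J ≤ j → j ≤ Jn → (A j).card = K j)
    (hAmax : ∀ j : ℕ, J ≤ j → j ≤ Jn →
      ∀ k ∈ A j, ∀ k' ∈ Finset.range (2 ^ (j - 1)) \ A j, |c j k'| ≤ |c j k|)
    (ftilde : ℕ → ℝ)
    (hftilde : ∀ i : ℕ, ftilde i =
      (∑ j ∈ Finset.range J, ∑ k ∈ Finset.range (2 ^ (j - 1)), c j k * φ j k i) +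
        ∑ j ∈ Finset.Icc J Jn, ∑ k ∈ A j, c j k * φ j k i) :
    Real.sqrt ((1 / (n : ℝ)) * ∑ i ∈ Finset.Icc 1 n, (f (x i) - ftilde i) ^ 2) ≤
      (∑' p : ℕ, ((p : ℝ) + 1) ^ 3 * (2 : ℝ) ^ (-((p : ℝ) + 1) / 2 + 1)) *
        (eVariationOn f (Set.Icc 0 1)).toReal * (2 : ℝ) ^ (-(J : ℝ)) := by
  have hn1 : 1 ≤ n := by rw [hn]; exact Nat.one_le_two_pow
  have hV0 : 0 ≤ (eVariationOn f (Set.Icc (0:ℝ) 1)).toReal := ENNReal.toReal_nonneg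
  have hφv : ∀ j, 1 ≤ j → ∀ k i', 1 ≤ i' → φ j k i' = (2:ℝ)^(((j:ℝ)-1)/2) *
      ((if (i'-1)/2^(Jn-j) = 2*k+1 then (1:ℝ) else 0) -
       (if (i'-1)/2^(Jn-j) = 2*k then (1:ℝ) else 0)) :=
    fun j hj k i' hi' => phi_eval (Nat.pow_pos (by norm_num)) hi' (hφ j k i' hj)
  -- residual representation
  have hresid : ∀ i, 1 ≤ i → i ≤ n → f (x i) - ftilde i
      = ∑ j ∈ Finset.Icc J Jn, ∑ k ∈ Finset.range (2^(j-1)) \ A j, c j k * φ j k i := by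
    intro i hi1 hin
    have hrec := recon hn (fun i => f (x i)) φ hφ0 hφ c hc hi1 hin
    rw [Finset.range_eq_Ico, ← Finset.sum_Ico_consecutive _ (Nat.zero_le J) (by omega : J ≤ Jn+1),
      ← Finset.range_eq_Ico, Finset.Ico_add_one_right_eq_Icc] at hrec
    have hAB : ∀ j ∈ Finset.Icc J Jn,
        ∑ k ∈ Finset.range (2^(j-1)), c j k * φ j k i
        = (∑ k ∈ Finset.range (2^(j-1)) \ A j, c j k * φ j k i) + ∑ k ∈ A j, c j k * φ j k i := by
      intro j hj
      obtain ⟨h1, h2⟩ := Finset.mem_Icc.1 hj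
      exact (Finset.sum_sdiff (hAsub j h1 h2)).symm
    rw [Finset.sum_congr rfl hAB, Finset.sum_add_distrib] at hrec
    rw [hftilde i]
    linarith [hrec]
  -- conversion Icc 1 n ↔ Fin n
  have hicc_fin : ∀ G : ℕ → ℝ, ∑ i ∈ Finset.Icc 1 n, G i = ∑ i : Fin n, G (i.1+1) := by
    intro G
    rw [← Finset.Ico_add_one_right_eq_Icc, Finset.sum_Ico_eq_sum_range,
      Fin.sum_univ_eq_sum_range (fun t => G (t+1)) n]
    exact Finset.sum_congr rfl (fun t _ => by rw [Nat.add_comm])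
  -- Minkowski step
  have hmink : Real.sqrt ((1/(n:ℝ)) * ∑ i ∈ Finset.Icc 1 n, (f (x i) - ftilde i)^2)
      ≤ ∑ j ∈ Finset.Icc J Jn,
          Real.sqrt ((1/(n:ℝ)) * ∑ i ∈ Finset.Icc 1 n,
            (∑ k ∈ Finset.range (2^(j-1)) \ A j, c j k * φ j k i)^2) := by
    set h : ℕ → Fin n → ℝ :=
      fun j i => ∑ k ∈ Finset.range (2^(j-1)) \ A j, c j k * φ j k (i.1+1) with hh
    have h1 : ∑ i ∈ Finset.Icc 1 n, (f (x i) - ftilde i)^2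
        = ∑ i : Fin n, (∑ j ∈ Finset.Icc J Jn, h j i)^2 := by
      rw [hicc_fin (fun i => (f (x i) - ftilde i)^2)]
      refine Finset.sum_congr rfl fun i _ => ?_
      rw [hresid (i.1+1) (Nat.succ_le_succ (Nat.zero_le _)) (Nat.succ_le_of_lt i.isLt)]
    have h2 : ∀ j, ∑ i ∈ Finset.Icc 1 n,
        (∑ k ∈ Finset.range (2^(j-1)) \ A j, c j k * φ j k i)^2
        = ∑ i : Fin n, (h j i)^2 := fun j =>
      hicc_fin (fun i => (∑ k ∈ Finset.range (2^(j-1)) \ A j, c j k * φ j k i)^2)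
    have hs : ∀ X : ℝ, Real.sqrt ((1/(n:ℝ)) * X) = Real.sqrt (1/(n:ℝ)) * Real.sqrt X :=
      fun X => Real.sqrt_mul (by positivity) X
    rw [h1, hs]
    calc Real.sqrt (1/(n:ℝ)) * Real.sqrt (∑ i : Fin n, (∑ j ∈ Finset.Icc J Jn, h j i)^2)
        ≤ Real.sqrt (1/(n:ℝ)) * ∑ j ∈ Finset.Icc J Jn, Real.sqrt (∑ i : Fin n, (h j i)^2) :=
          mul_le_mul_of_nonneg_left (minkowski_fin (Finset.Icc J Jn) h) (Real.sqrt_nonneg _)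
    _ = _ := by
        rw [Finset.mul_sum]
        exact Finset.sum_congr rfl fun j _ => by rw [h2 j, hs]
  -- per-level bound
  have hlev : ∀ j ∈ Finset.Icc J Jn,
      Real.sqrt ((1/(n:ℝ)) * ∑ i ∈ Finset.Icc 1 n,
        (∑ k ∈ Finset.range (2^(j-1)) \ A j, c j k * φ j k i)^2)
      ≤ (((j-J:ℕ):ℝ)+1)^3 * (2:ℝ)^(-(((j-J:ℕ):ℝ)+1)/2+1)
          * (eVariationOn f (Set.Icc (0:ℝ) 1)).toReal * (2:ℝ)^(-(J:ℝ)) := by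
    intro j hj
    obtain ⟨hJj, hjn⟩ := Finset.mem_Icc.1 hj
    have hj1 : 1 ≤ j := le_trans hJ1 hJj
    have hBsub : Finset.range (2^(j-1)) \ A j ⊆ Finset.range (2^(j-1)) := Finset.sdiff_subset
    have hnorm := level_norm hn hj1 hjn (c j) (φ j) (hφv j hj1) _ hBsub
    rw [hnorm]
    have hl1 := coef_l1 hn hj1 hjn x hxmono hxrange f hf (c j) (φ j) (hφv j hj1) (hc j)
    have hcomp := compress_bound (c j) (Finset.range (2^(j-1))) (A j) (hAsub j hJj hjn)
      (fun k hk k' hk' => hAmax j hJj hjn k hk k' hk')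
    have hsumnn : 0 ≤ ∑ k ∈ Finset.range (2^(j-1)), |c j k| :=
      Finset.sum_nonneg fun _ _ => abs_nonneg _
    have hWsq : (∑ k ∈ Finset.range (2^(j-1)), |c j k|)^2 / (((A j).card:ℝ)+1)
        ≤ ((2:ℝ)^(-((j:ℝ)+1)/2) * (eVariationOn f (Set.Icc (0:ℝ) 1)).toReal)^2
          / (((A j).card:ℝ)+1) := by
      gcongr
    have hD := Dsq_bound hJj ((eVariationOn f (Set.Icc (0:ℝ) 1)).toReal) hV0 (hK j)
    have hcard : ((A j).card : ℝ) = (K j : ℝ) := by rw [hAcard j hJj hjn]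
    have hchain : ∑ k ∈ Finset.range (2^(j-1)) \ A j, (c j k)^2
        ≤ ((((j-J:ℕ):ℝ)+1)^3 * (2:ℝ)^(-(((j-J:ℕ):ℝ)+1)/2+1)
            * (eVariationOn f (Set.Icc (0:ℝ) 1)).toReal * (2:ℝ)^(-(J:ℝ)))^2 := by
      refine le_trans hcomp (le_trans hWsq ?_)
      rw [hcard]
      exact hD
    have hDnn : 0 ≤ (((j-J:ℕ):ℝ)+1)^3 * (2:ℝ)^(-(((j-J:ℕ):ℝ)+1)/2+1)
        * (eVariationOn f (Set.Icc (0:ℝ) 1)).toReal * (2:ℝ)^(-(J:ℝ)) :=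
      mul_nonneg (mul_nonneg (mul_nonneg (by positivity) (by positivity)) hV0) (by positivity)
    calc Real.sqrt (∑ k ∈ Finset.range (2^(j-1)) \ A j, (c j k)^2)
        ≤ Real.sqrt (((((j-J:ℕ):ℝ)+1)^3 * (2:ℝ)^(-(((j-J:ℕ):ℝ)+1)/2+1)
            * (eVariationOn f (Set.Icc (0:ℝ) 1)).toReal * (2:ℝ)^(-(J:ℝ)))^2) :=
          Real.sqrt_le_sqrt hchain
    _ = _ := Real.sqrt_sq hDnn
  -- tail sum
  have htail : ∑ j ∈ Finset.Icc J Jn, ((((j-J:ℕ):ℝ)+1)^3 * (2:ℝ)^(-(((j-J:ℕ):ℝ)+1)/2+1)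
        * (eVariationOn f (Set.Icc (0:ℝ) 1)).toReal * (2:ℝ)^(-(J:ℝ)))
      ≤ (∑' p : ℕ, ((p:ℝ)+1)^3 * (2:ℝ)^(-((p:ℝ)+1)/2+1))
        * (eVariationOn f (Set.Icc (0:ℝ) 1)).toReal * (2:ℝ)^(-(J:ℝ)) := by
    rw [← Finset.Ico_add_one_right_eq_Icc, Finset.sum_Ico_eq_sum_range]
    simp only [Nat.add_sub_cancel_left]
    calc ∑ p ∈ Finset.range (Jn+1-J), (((p:ℝ)+1)^3 * (2:ℝ)^(-((p:ℝ)+1)/2+1)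
          * (eVariationOn f (Set.Icc (0:ℝ) 1)).toReal * (2:ℝ)^(-(J:ℝ)))
        = (∑ p ∈ Finset.range (Jn+1-J), ((p:ℝ)+1)^3 * (2:ℝ)^(-((p:ℝ)+1)/2+1))
          * (eVariationOn f (Set.Icc (0:ℝ) 1)).toReal * (2:ℝ)^(-(J:ℝ)) := by
          rw [Finset.sum_mul, Finset.sum_mul]
    _ ≤ _ := by
        apply mul_le_mul_of_nonneg_right _ (by positivity)
        apply mul_le_mul_of_nonneg_right _ hV0
        exact summable_C.sum_le_tsum (Finset.range (Jn+1-J)) (fun p _ => by positivity)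
  calc Real.sqrt ((1/(n:ℝ)) * ∑ i ∈ Finset.Icc 1 n, (f (x i) - ftilde i)^2)
      ≤ ∑ j ∈ Finset.Icc J Jn,
          Real.sqrt ((1/(n:ℝ)) * ∑ i ∈ Finset.Icc 1 n,
            (∑ k ∈ Finset.range (2^(j-1)) \ A j, c j k * φ j k i)^2) := hmink
  _ ≤ ∑ j ∈ Finset.Icc J Jn, ((((j-J:ℕ):ℝ)+1)^3 * (2:ℝ)^(-(((j-J:ℕ):ℝ)+1)/2+1)
        * (eVariationOn f (Set.Icc (0:ℝ) 1)).toReal * (2:ℝ)^(-(J:ℝ))) :=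
      Finset.sum_le_sum hlev
  _ ≤ _ := htail
end

section
/- Let Z = a + σε with ε standard Gaussian, σ > 0, and let β̂ > 1/2, λ̂ ≥ 0, p ≥ 1. Then E[(a - (e^{β̂ Z²/σ²}/(p e^{β̂λ̂} + e^{β̂ Z²/σ²})) Z)²] ≤ 6(λ̂ + β̂^{-1} log p)σ² + 36σ². -/
open MeasureTheory ProbabilityTheory Real Set
open scoped ENNReal NNReal

lemma sq_exp_integrable : Integrable (fun x : ℝ => x ^ 2 * Real.exp (-(1/2) * x ^ 2)) := by
  have hrp : ∀ x : ℝ, x ^ (2:ℝ) = x ^ 2 := fun x => by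
    rw [show (2:ℝ) = ((2:ℕ):ℝ) by norm_num, Real.rpow_natCast]
  have := integrable_rpow_mul_exp_neg_mul_sq (b := (1/2:ℝ)) (by norm_num) (s := 2) (by norm_num)
  simpa [hrp] using this

lemma sq_exp_integral : ∫ x : ℝ, x ^ 2 * Real.exp (-(1/2) * x ^ 2) = Real.sqrt (2 * π) := by
  have hrp : ∀ x : ℝ, x ^ (2:ℝ) = x ^ 2 := fun x => by
    rw [show (2:ℝ) = ((2:ℕ):ℝ) by norm_num, Real.rpow_natCast]
  have hint := sq_exp_integrable
  have hIoi : ∫ x in Ioi (0:ℝ), x ^ 2 * Real.exp (-(1/2) * x ^ 2)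
      = Real.sqrt (2 * π) / 2 := by
    have h := integral_rpow_mul_exp_neg_mul_rpow (p := (2:ℝ)) (q := (2:ℝ)) (b := (1/2:ℝ))
      (by norm_num) (by norm_num) (by norm_num)
    simp only [hrp] at h
    rw [h]
    have hG : Real.Gamma (((2:ℝ) + 1) / 2) = Real.sqrt π / 2 := by
      rw [show ((2:ℝ)+1)/2 = 1/2 + 1 by norm_num, Real.Gamma_add_one (by norm_num),
        Real.Gamma_one_half_eq]
      ring
    have hb : ((1:ℝ)/2) ^ (-((2:ℝ) + 1) / 2) = 2 * Real.sqrt 2 := by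
      rw [show ((1:ℝ)/2) = (2:ℝ) ^ (-1:ℝ) by rw [Real.rpow_neg_one]; norm_num,
        ← Real.rpow_mul (by norm_num : (0:ℝ) ≤ 2),
        show (-1:ℝ) * (-((2:ℝ) + 1) / 2) = 1 + 1/2 by norm_num,
        Real.rpow_add (by norm_num), Real.rpow_one, ← Real.sqrt_eq_rpow]
    rw [hb, hG, Real.sqrt_mul (by norm_num : (0:ℝ) ≤ 2)]
    ring
  have hsplit := integral_add_compl (measurableSet_Ioi (a := (0:ℝ))) hint
  rw [compl_Ioi] at hsplit
  have hIic : ∫ x in Iic (0:ℝ), x ^ 2 * Real.exp (-(1/2) * x ^ 2)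
      = ∫ x in Ioi (0:ℝ), x ^ 2 * Real.exp (-(1/2) * x ^ 2) := by
    have h := integral_comp_neg_Ioi (0:ℝ) (fun x => x ^ 2 * Real.exp (-(1/2) * x ^ 2))
    simp only [neg_zero] at h
    rw [← h]
    exact setIntegral_congr_fun measurableSet_Ioi fun x _ => by simp [neg_sq]
  rw [← hsplit, hIic, hIoi]
  ring

lemma gaussianReal_density : gaussianReal 0 1 =
    volume.withDensity (fun x => ((Real.toNNReal (gaussianPDFReal 0 1 x) : ℝ≥0) : ℝ≥0∞)) := by
  rw [gaussianReal_of_var_ne_zero 0 one_ne_zero]; rfl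

lemma pdf01 (x : ℝ) :
    gaussianPDFReal 0 1 x = (Real.sqrt (2 * π))⁻¹ * Real.exp (-(1/2) * x ^ 2) := by
  simp only [gaussianPDFReal, NNReal.coe_one, mul_one, sub_zero]
  ring_nf

lemma smul_eq_aux : (fun x : ℝ => (Real.toNNReal (gaussianPDFReal 0 1 x)) • (x ^ 2 : ℝ))
    = fun x : ℝ => (Real.sqrt (2 * π))⁻¹ * (x ^ 2 * Real.exp (-(1/2) * x ^ 2)) := by
  funext x
  rw [NNReal.smul_def, Real.coe_toNNReal _ (gaussianPDFReal_nonneg 0 1 x), pdf01]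
  simp only [smul_eq_mul]
  ring

lemma integrable_sq_gauss : Integrable (fun x : ℝ => x ^ 2) (gaussianReal 0 1) := by
  rw [gaussianReal_density, integrable_withDensity_iff_integrable_smul
    ((measurable_gaussianPDFReal 0 1).real_toNNReal)]
  rw [show (fun x : ℝ => (Real.toNNReal (gaussianPDFReal 0 1 x)) • (x ^ 2 : ℝ)) = _ from smul_eq_aux]
  exact sq_exp_integrable.const_mul _

lemma sq_moment : ∫ x, x ^ 2 ∂(gaussianReal 0 1) = 1 := by
  rw [gaussianReal_density,
    integral_withDensity_eq_integral_smul ((measurable_gaussianPDFReal 0 1).real_toNNReal)]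
  rw [show (fun x : ℝ => (Real.toNNReal (gaussianPDFReal 0 1 x)) • (x ^ 2 : ℝ)) = _ from smul_eq_aux]
  rw [integral_const_mul, sq_exp_integral,
    inv_mul_cancel₀ (ne_of_gt (Real.sqrt_pos.mpr (by positivity)))]

lemma weight_bound {σ β T Z : ℝ} (hσ : 0 < σ) (hT : 0 ≤ T) (hβ : 1/2 < β) :
    (Real.exp (β * T / σ ^ 2) / (Real.exp (β * T / σ ^ 2) + Real.exp (β * Z ^ 2 / σ ^ 2)) * Z) ^ 2
      ≤ T + σ ^ 2 := by
  set c := Real.exp (β * T / σ ^ 2) with hcdef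
  set d := Real.exp (β * Z ^ 2 / σ ^ 2) with hddef
  have hc : 0 < c := Real.exp_pos _
  have hd : 0 < d := Real.exp_pos _
  have hσ2 : 0 < σ ^ 2 := by positivity
  have hfrac0 : 0 ≤ c / (c + d) := by positivity
  rcases le_or_gt (Z ^ 2) T with h | h
  · have h1 : c / (c + d) ≤ 1 := by
      rw [div_le_one (by positivity)]; linarith
    have h2 : (c / (c + d)) ^ 2 ≤ 1 := by nlinarith
    calc (c / (c + d) * Z) ^ 2 = (c / (c + d)) ^ 2 * Z ^ 2 := by ring
      _ ≤ 1 * Z ^ 2 := mul_le_mul_of_nonneg_right h2 (sq_nonneg Z)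
      _ ≤ T + σ ^ 2 := by nlinarith
  · have h1 : c / (c + d) ≤ c / d :=
      div_le_div_of_nonneg_left hc.le hd (by linarith)
    have hcd : c / d = Real.exp (β * (T - Z ^ 2) / σ ^ 2) := by
      rw [hcdef, hddef, ← Real.exp_sub]; congr 1; ring
    have h2 : (c / d) ^ 2 = Real.exp (2 * β * (T - Z ^ 2) / σ ^ 2) := by
      rw [hcd, sq, ← Real.exp_add]; congr 1; ring
    have h3 : Real.exp (2 * β * (T - Z ^ 2) / σ ^ 2) ≤ Real.exp ((T - Z ^ 2) / σ ^ 2) := by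
      apply Real.exp_le_exp.mpr
      rw [div_le_div_iff₀ hσ2 hσ2]
      nlinarith [mul_nonneg (mul_nonneg (by linarith : (0:ℝ) ≤ 2 * β - 1)
        (by linarith : (0:ℝ) ≤ Z ^ 2 - T)) hσ2.le]
    -- main estimate: Z^2 * exp((T - Z^2)/σ^2) ≤ T + σ^2
    have hu0 : 0 < Z ^ 2 - T := by linarith
    have hkey : Z ^ 2 * Real.exp ((T - Z ^ 2) / σ ^ 2) ≤ T + σ ^ 2 := by
      have e1 : Real.exp ((T - Z ^ 2) / σ ^ 2) ≤ 1 := by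
        apply Real.exp_le_one_iff.mpr
        apply div_nonpos_of_nonpos_of_nonneg (by linarith) hσ2.le
      have e2 : (Z ^ 2 - T) * Real.exp ((T - Z ^ 2) / σ ^ 2) ≤ σ ^ 2 := by
        have h4 : (Z ^ 2 - T) / σ ^ 2 ≤ Real.exp ((Z ^ 2 - T) / σ ^ 2) := by
          have := Real.add_one_le_exp ((Z ^ 2 - T) / σ ^ 2)
          linarith
        have h5 := mul_le_mul_of_nonneg_left h4 hσ2.le
        rw [show σ ^ 2 * ((Z ^ 2 - T) / σ ^ 2) = Z ^ 2 - T by field_simp] at h5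
        rw [show (T - Z ^ 2) / σ ^ 2 = -((Z ^ 2 - T) / σ ^ 2) by ring, Real.exp_neg,
          mul_inv_le_iff₀ (Real.exp_pos _)]
        linarith [h5]
      nlinarith [Real.exp_pos ((T - Z ^ 2) / σ ^ 2)]
    calc (c / (c + d) * Z) ^ 2 = (c / (c + d)) ^ 2 * Z ^ 2 := by ring
      _ ≤ (c / d) ^ 2 * Z ^ 2 := by
          apply mul_le_mul_of_nonneg_right _ (sq_nonneg Z)
          exact pow_le_pow_left₀ hfrac0 h1 2
      _ ≤ Real.exp ((T - Z ^ 2) / σ ^ 2) * Z ^ 2 := by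
          apply mul_le_mul_of_nonneg_right _ (sq_nonneg Z)
          rw [h2]; exact h3
      _ = Z ^ 2 * Real.exp ((T - Z ^ 2) / σ ^ 2) := by ring
      _ ≤ T + σ ^ 2 := hkey

theorem shrinkage_crude_bound_large_beta
    (p : ℕ) (hp : 1 ≤ p) (a σ βh lamh : ℝ) (hσ : 0 < σ) (hβ : 1 / 2 < βh) (hlam : 0 ≤ lamh) :
    (∫ ε, (a - Real.exp (βh * (a + σ * ε) ^ 2 / σ ^ 2) /
          ((p : ℝ) * Real.exp (βh * lamh) + Real.exp (βh * (a + σ * ε) ^ 2 / σ ^ 2)) *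
            (a + σ * ε)) ^ 2 ∂(gaussianReal 0 1)) ≤
      6 * (lamh + βh⁻¹ * Real.log p) * σ ^ 2 + 36 * σ ^ 2 := by
  have hβ0 : 0 < βh := by linarith
  have hp1 : (1:ℝ) ≤ (p:ℝ) := by exact_mod_cast hp
  have hlogp : 0 ≤ Real.log p := Real.log_nonneg hp1
  set T := (lamh + βh⁻¹ * Real.log p) * σ ^ 2 with hTdef
  have hT : 0 ≤ T := by
    apply mul_nonneg _ (sq_nonneg σ)
    have : 0 ≤ βh⁻¹ * Real.log p := mul_nonneg (inv_nonneg.mpr hβ0.le) hlogp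
    linarith
  have hc : (p:ℝ) * Real.exp (βh * lamh) = Real.exp (βh * T / σ ^ 2) := by
    rw [hTdef, show βh * ((lamh + βh⁻¹ * Real.log p) * σ ^ 2) / σ ^ 2
        = βh * lamh + Real.log p by field_simp]
    rw [Real.exp_add, Real.exp_log (by positivity : (0:ℝ) < (p:ℝ))]
    ring
  have hpt : ∀ ε : ℝ, (a - Real.exp (βh * (a + σ * ε) ^ 2 / σ ^ 2) /
      ((p : ℝ) * Real.exp (βh * lamh) + Real.exp (βh * (a + σ * ε) ^ 2 / σ ^ 2)) *
        (a + σ * ε)) ^ 2 ≤ (2 * (T + σ ^ 2)) + 2 * σ ^ 2 * ε ^ 2 := by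
    intro ε
    rw [hc]
    set Z := a + σ * ε with hZ
    set c := Real.exp (βh * T / σ ^ 2) with hc2
    set dd := Real.exp (βh * Z ^ 2 / σ ^ 2) with hd2
    have hcpos : 0 < c := Real.exp_pos _
    have hdpos : 0 < dd := Real.exp_pos _
    have hne : c + dd ≠ 0 := by positivity
    have hrw : a - dd / (c + dd) * Z = c / (c + dd) * Z - σ * ε := by
      have ha : a = Z - σ * ε := by rw [hZ]; ring
      rw [ha]; field_simp; ring
    rw [hrw]
    have hw := weight_bound (σ := σ) (β := βh) (T := T) (Z := Z) hσ hT hβ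
    rw [← hc2, ← hd2] at hw
    nlinarith [sq_nonneg (c / (c + dd) * Z + σ * ε)]
  have hint : Integrable (fun ε : ℝ => (2 * (T + σ ^ 2)) + 2 * σ ^ 2 * ε ^ 2)
      (gaussianReal 0 1) :=
    (integrable_const _).add (integrable_sq_gauss.const_mul _)
  have hmono := integral_mono_of_nonneg
    (Filter.Eventually.of_forall fun ε => sq_nonneg _) hint
    (Filter.Eventually.of_forall hpt)
  refine hmono.trans ?_
  rw [integral_add (integrable_const _) (integrable_sq_gauss.const_mul _),
    integral_const, integral_const_mul, sq_moment]
  simp only [probReal_univ, measure_univ, ENNReal.toReal_one, one_smul, mul_one]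
  nlinarith [hT, sq_nonneg σ]
end

section
/- Let ε be a standard Gaussian random variable, γ ≥ √(2 + 2 log 3), and 1/4 ≤ β ≤ 1/2. Then for every x ≥ 4γ, E[(x - s(x+ε)(x+ε))²] ≤ 2 + 16γ²(2 e^{-3γ²/2} + 4 e^{-2γ²}) ≤ 0.6 γ², where s(z) = e^{βz²}/(p e^{2β} + e^{βz²}) and γ² = 2 + β^{-1} log p with p ≥ 3. -/
open MeasureTheory ProbabilityTheory Real Set
open scoped NNReal ENNReal

noncomputable def φg (x : ℝ) : ℝ := (Real.sqrt (2 * Real.pi))⁻¹ * Real.exp (-x^2/2)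

lemma pdf_eqg (x : ℝ) : gaussianPDFReal 0 1 x = φg x := by
  simp [gaussianPDFReal, φg]

lemma phig_nonneg (x : ℝ) : 0 ≤ φg x := by
  unfold φg; positivity

lemma integrable_phig : Integrable φg := by
  have := integrable_gaussianPDFReal 0 1
  exact this.congr (ae_of_all _ fun x => pdf_eqg x)

lemma integral_phig : ∫ x, φg x = 1 := by
  rw [show φg = gaussianPDFReal 0 1 from funext fun x => (pdf_eqg x).symm]
  exact integral_gaussianPDFReal_eq_one 0 one_ne_zero

lemma integral_gaussg (g : ℝ → ℝ) :
    ∫ x, g x ∂(gaussianReal 0 1) = ∫ x, φg x * g x := by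
  rw [gaussianReal_of_var_ne_zero 0 one_ne_zero]
  have h : gaussianPDF 0 1 = fun x => ((Real.toNNReal (gaussianPDFReal 0 1 x) : ℝ≥0) : ℝ≥0∞) := rfl
  rw [h, integral_withDensity_eq_integral_smul
    ((measurable_gaussianPDFReal 0 1).real_toNNReal) g]
  refine integral_congr_ae (ae_of_all _ fun x => ?_)
  simp only [pdf_eqg]
  rw [NNReal.smul_def, Real.coe_toNNReal _ (phig_nonneg x), smul_eq_mul]

lemma integrable_gaussg_iff (g : ℝ → ℝ) :
    Integrable g (gaussianReal 0 1) ↔ Integrable (fun x => φg x * g x) := by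
  rw [gaussianReal_of_var_ne_zero 0 one_ne_zero]
  have h : gaussianPDF 0 1 = fun x => ((Real.toNNReal (gaussianPDFReal 0 1 x) : ℝ≥0) : ℝ≥0∞) := rfl
  rw [h, integrable_withDensity_iff_integrable_smul
    ((measurable_gaussianPDFReal 0 1).real_toNNReal)]
  refine integrable_congr (ae_of_all _ fun x => ?_)
  simp only [pdf_eqg]
  rw [NNReal.smul_def, Real.coe_toNNReal _ (phig_nonneg x), smul_eq_mul]

lemma key_exp_id (c : ℝ) : (fun x : ℝ => φg x * Real.exp (c*x))
    = fun x => ((Real.sqrt (2*Real.pi))⁻¹ * Real.exp (c^2/2)) * Real.exp (-(1/2) * (x - c)^2) := by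
  funext x
  unfold φg
  have h : -x^2/2 + c*x = c^2/2 + (-(1/2)*(x-c)^2) := by ring
  rw [mul_assoc, mul_assoc, ← Real.exp_add, ← Real.exp_add, h]

lemma key_exp_integrable (c : ℝ) : Integrable (fun x : ℝ => φg x * Real.exp (c*x)) := by
  rw [key_exp_id]
  exact ((integrable_exp_neg_mul_sq (by norm_num : (0:ℝ) < 1/2)).comp_sub_right c).const_mul _

lemma key_exp (c : ℝ) : ∫ x : ℝ, φg x * Real.exp (c*x) = Real.exp (c^2/2) := by
  rw [key_exp_id, MeasureTheory.integral_const_mul]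
  have h1 : ∫ x : ℝ, Real.exp (-(1/2) * (x - c)^2)
      = ∫ x : ℝ, Real.exp (-(1/2) * x^2) :=
    integral_sub_right_eq_self (fun y => Real.exp (-(1/2) * y^2)) c
  rw [h1, integral_gaussian, show Real.pi/(1/2) = 2*Real.pi by ring]
  have h2 : Real.sqrt (2*Real.pi) ≠ 0 := by positivity
  field_simp

lemma key_sq_id : (fun x : ℝ => φg x * x^2)
    = fun x : ℝ => (Real.sqrt (2*Real.pi))⁻¹ * (x^2 * Real.exp (-(1/2) * x^2)) := by
  funext x
  unfold φg
  rw [show -x^2/2 = -(1/2)*x^2 by ring]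
  ring

lemma sq_exp_le (x : ℝ) : x^2 * Real.exp (-(1/2) * x^2) ≤ 4 * Real.exp (-(1/4) * x^2) := by
  have h1 : x^2/4 + 1 ≤ Real.exp (x^2/4) := Real.add_one_le_exp _
  have h2 : Real.exp (-(1/4) * x^2) * Real.exp (x^2/4) = 1 := by
    rw [← Real.exp_add, show -(1/4)*x^2 + x^2/4 = 0 by ring, Real.exp_zero]
  have h3 : Real.exp (-(1/2) * x^2) = Real.exp (-(1/4) * x^2) * Real.exp (-(1/4) * x^2) := by
    rw [← Real.exp_add]; ring_nf
  have h4 : (0:ℝ) < Real.exp (-(1/4) * x^2) := Real.exp_pos _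
  have h5 : x^2 * Real.exp (-(1/4) * x^2) ≤ 4 := by
    nlinarith [Real.exp_pos (x^2/4)]
  nlinarith

lemma key_sq_integrable : Integrable (fun x : ℝ => φg x * x^2) := by
  rw [key_sq_id]
  refine Integrable.mono' (((integrable_exp_neg_mul_sq (by norm_num : (0:ℝ) < 1/4)).const_mul
    ((Real.sqrt (2*Real.pi))⁻¹ * 4))) ?_ (ae_of_all _ fun x => ?_)
  · exact (Measurable.aestronglyMeasurable (by measurability))
  · have h0 : (0:ℝ) ≤ (Real.sqrt (2*Real.pi))⁻¹ := by positivity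
    have h1 : (0:ℝ) ≤ x^2 * Real.exp (-(1/2) * x^2) := by positivity
    rw [Real.norm_eq_abs, abs_of_nonneg (by positivity)]
    have := sq_exp_le x
    calc (Real.sqrt (2*Real.pi))⁻¹ * (x^2 * Real.exp (-(1/2) * x^2))
        ≤ (Real.sqrt (2*Real.pi))⁻¹ * (4 * Real.exp (-(1/4) * x^2)) := by nlinarith
      _ = (Real.sqrt (2*Real.pi))⁻¹ * 4 * Real.exp (-(1/4) * x^2) := by ring

lemma key_sq : ∫ x : ℝ, φg x * x^2 = 1 := by
  rw [key_sq_id, MeasureTheory.integral_const_mul]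
  have habs : (fun x : ℝ => x^2 * Real.exp (-(1/2)*x^2))
      = fun x : ℝ => |x|^2 * Real.exp (-(1/2)*|x|^2) := by
    funext x; rw [sq_abs]
  have h2 : ∫ x : ℝ, x^2 * Real.exp (-(1/2) * x^2)
      = 2 * ∫ x in Set.Ioi (0:ℝ), x^2 * Real.exp (-(1/2) * x^2) := by
    conv_lhs => rw [habs]
    exact integral_comp_abs (f := fun u : ℝ => u^2 * Real.exp (-(1/2)*u^2))
  have h3 : ∫ x in Set.Ioi (0:ℝ), x^2 * Real.exp (-(1/2) * x^2)
      = ∫ x in Set.Ioi (0:ℝ), x ^ (2:ℝ) * Real.exp (-(1/2) * x ^ (2:ℝ)) := by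
    refine setIntegral_congr_fun measurableSet_Ioi (fun x hx => ?_)
    rw [show ((2:ℝ)) = ((2:ℕ):ℝ) by norm_num, Real.rpow_natCast]
  have h4 : ∫ x in Set.Ioi (0:ℝ), x ^ (2:ℝ) * Real.exp (-(1/2) * x ^ (2:ℝ))
      = (1/2:ℝ) ^ (-((2:ℝ)+1)/2) * (1/2) * Real.Gamma (((2:ℝ)+1)/2) :=
    integral_rpow_mul_exp_neg_mul_rpow (by norm_num) (by norm_num) (by norm_num)
  have hg : Real.Gamma (((2:ℝ)+1)/2) = Real.sqrt Real.pi / 2 := by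
    rw [show ((2:ℝ)+1)/2 = 1/2 + 1 by norm_num, Real.Gamma_add_one (by norm_num),
      Real.Gamma_one_half_eq]
    ring
  have hr : (1/2:ℝ) ^ (-((2:ℝ)+1)/2) = 2 * Real.sqrt 2 := by
    rw [show (-((2:ℝ)+1)/2) = -(3/2) by norm_num, one_div,
      Real.inv_rpow (by norm_num : (0:ℝ) ≤ 2), ← Real.rpow_neg (by norm_num : (0:ℝ) ≤ 2),
      neg_neg, show (3/2 : ℝ) = 1 + 1/2 by norm_num,
      Real.rpow_add (by norm_num : (0:ℝ) < 2), Real.rpow_one, ← Real.sqrt_eq_rpow]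
  rw [h2, h3, h4, hg, hr, Real.sqrt_mul (by norm_num : (0:ℝ) ≤ 2)]
  have hs2 : Real.sqrt 2 > 0 := by positivity
  have hsp : Real.sqrt Real.pi > 0 := Real.sqrt_pos.mpr Real.pi_pos
  field_simp

lemma mono_aux {u v : ℝ} (h2 : 2 ≤ v) (huv : v ≤ u) :
    u * Real.exp (-u/2) ≤ v * Real.exp (-v/2) := by
  have h := Real.add_one_le_exp ((u - v)/2)
  have hE : 0 < Real.exp ((u-v)/2) := Real.exp_pos _
  have h1 : u ≤ v * Real.exp ((u-v)/2) := by nlinarith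
  have h3 : Real.exp ((u-v)/2) * Real.exp (-u/2) = Real.exp (-v/2) := by
    rw [← Real.exp_add]; congr 1; ring
  have h4 : 0 < Real.exp (-u/2) := Real.exp_pos _
  calc u * Real.exp (-u/2) ≤ (v * Real.exp ((u-v)/2)) * Real.exp (-u/2) := by nlinarith
    _ = v * Real.exp (-v/2) := by rw [mul_assoc, h3]

set_option maxHeartbeats 1000000 in
lemma pointwise_bound (β γ x P : ℝ) (hβ1 : 1/4 ≤ β) (hγ4 : 4 ≤ γ^2) (hγpos : 0 < γ)
    (hx : 4*γ ≤ x) (hP : P = Real.exp (β * γ^2)) (ε : ℝ) :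
    (x - Real.exp (β*(x+ε)^2) / (P + Real.exp (β*(x+ε)^2)) * (x+ε))^2
      ≤ 2*ε^2 + 8*γ^2*Real.exp (-3*γ^2/2)
        + 2*γ^2 * (Real.exp (-γ*x) * Real.exp (-2*γ*ε)) := by
  set z := x + ε with hz
  set E := Real.exp (β*z^2) with hEdef
  have hE0 : 0 < E := Real.exp_pos _
  have hP0 : 0 < P := hP ▸ Real.exp_pos _
  have hD0 : 0 < P + E := by linarith
  set w := P / (P + E) with hw
  have hsw : x - E / (P + E) * z = -ε + w * z := by
    rw [hw]; field_simp; ring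
  have hw0 : 0 ≤ w := le_of_lt (div_pos hP0 hD0)
  have hw1 : w ≤ 1 := by rw [hw, div_le_one hD0]; linarith
  clear_value z E w
  have claim : γ^2 ≤ z^2 → (w*z)^2 ≤ z^2 * Real.exp ((γ^2 - z^2)/2) := by
    intro hzγ
    have hwE : w ≤ Real.exp (β*γ^2 - β*z^2) := by
      have h1 : w ≤ P / E := by
        rw [hw, div_le_div_iff₀ hD0 hE0]
        nlinarith
      have h2 : P / E = Real.exp (β*γ^2 - β*z^2) := by
        rw [hP, hEdef, Real.exp_sub]
      linarith [h1, h2.le, h2.ge]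
    have hsq : w^2 ≤ Real.exp (β*γ^2 - β*z^2)^2 := by nlinarith
    have hexp2 : Real.exp (β*γ^2 - β*z^2)^2 = Real.exp (2*(β*γ^2 - β*z^2)) := by
      rw [sq, ← Real.exp_add]; congr 1; ring
    have harg : 2*(β*γ^2 - β*z^2) ≤ (γ^2 - z^2)/2 := by
      nlinarith [mul_nonneg (sub_nonneg.2 hzγ) (by linarith : (0:ℝ) ≤ 2*β - 1/2)]
    have hle : Real.exp (2*(β*γ^2 - β*z^2)) ≤ Real.exp ((γ^2 - z^2)/2) :=
      Real.exp_le_exp.2 harg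
    calc (w*z)^2 = w^2 * z^2 := by ring
      _ ≤ Real.exp ((γ^2 - z^2)/2) * z^2 := by nlinarith [sq_nonneg z, sq_nonneg w]
      _ = z^2 * Real.exp ((γ^2 - z^2)/2) := by ring
  have expand : ∀ a : ℝ, γ^2 ≤ z^2 → z^2 * Real.exp ((γ^2 - z^2)/2)
      = Real.exp (γ^2/2) * (z^2 * Real.exp (-z^2/2)) := by
    intro a _
    rw [show (γ^2 - z^2)/2 = γ^2/2 + -z^2/2 by ring, Real.exp_add]
    ring
  have claimGlobal : (w*z)^2 ≤ γ^2 := by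
    rcases le_or_gt (z^2) (γ^2) with h|h
    · nlinarith [mul_nonneg (by nlinarith : (0:ℝ) ≤ 1 - w^2) (sq_nonneg z)]
    · have hc := claim h.le
      have hm := mono_aux (u := z^2) (v := γ^2) (by linarith) h.le
      have h1 := expand 0 h.le
      have h2 : Real.exp (γ^2/2) * Real.exp (-γ^2/2) = 1 := by
        rw [← Real.exp_add, show γ^2/2 + -γ^2/2 = 0 by ring, Real.exp_zero]
      have hep : 0 < Real.exp (γ^2/2) := Real.exp_pos _
      calc (w*z)^2 ≤ z^2 * Real.exp ((γ^2-z^2)/2) := hc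
        _ = Real.exp (γ^2/2) * (z^2 * Real.exp (-z^2/2)) := h1
        _ ≤ Real.exp (γ^2/2) * (γ^2 * Real.exp (-γ^2/2)) := mul_le_mul_of_nonneg_left hm hep.le
        _ = γ^2 * (Real.exp (γ^2/2) * Real.exp (-γ^2/2)) := by ring
        _ = γ^2 := by rw [h2, mul_one]
  rcases le_or_gt (-(x/2)) ε with hgood|hbad
  · -- good event
    have hz2 : 2*γ ≤ z := by rw [hz]; linarith
    have hz4 : 4*γ^2 ≤ z^2 := by nlinarith
    have hzγ : γ^2 ≤ z^2 := by nlinarith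
    have hc := claim hzγ
    have hm := mono_aux (u := z^2) (v := 4*γ^2) (by linarith) hz4
    have h1 := expand 0 hzγ
    have hep : 0 < Real.exp (γ^2/2) := Real.exp_pos _
    have hgb : (w*z)^2 ≤ 4*γ^2*Real.exp (-3*γ^2/2) := by
      calc (w*z)^2 ≤ z^2 * Real.exp ((γ^2-z^2)/2) := hc
        _ = Real.exp (γ^2/2) * (z^2 * Real.exp (-z^2/2)) := h1
        _ ≤ Real.exp (γ^2/2) * (4*γ^2 * Real.exp (-(4*γ^2)/2)) := mul_le_mul_of_nonneg_left hm hep.le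
        _ = 4*γ^2 * (Real.exp (γ^2/2) * Real.exp (-(4*γ^2)/2)) := by ring
        _ = 4*γ^2 * Real.exp (-3*γ^2/2) := by
            rw [← Real.exp_add, show γ^2/2 + -(4*γ^2)/2 = -3*γ^2/2 by ring]
    have hpos : 0 ≤ 2*γ^2 * (Real.exp (-γ*x) * Real.exp (-2*γ*ε)) := by positivity
    rw [hsw]
    have hkey : (-ε + w*z)^2 ≤ 2*ε^2 + 2*(w*z)^2 := by nlinarith [sq_nonneg (ε + w*z)]
    linarith
  · -- bad event
    have h1 : (1:ℝ) ≤ Real.exp (-γ*x) * Real.exp (-2*γ*ε) := by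
      rw [← Real.exp_add]
      have : (0:ℝ) ≤ -γ*x + -2*γ*ε := by nlinarith
      linarith [Real.add_one_le_exp (-γ*x + -2*γ*ε)]
    have hpos2 : 0 ≤ 8*γ^2*Real.exp (-3*γ^2/2) := by positivity
    rw [hsw]
    have hkey : (-ε + w*z)^2 ≤ 2*ε^2 + 2*(w*z)^2 := by nlinarith [sq_nonneg (ε + w*z)]
    have h2 : (0:ℝ) ≤ (Real.exp (-γ*x) * Real.exp (-2*γ*ε) - 1) * γ^2 :=
      mul_nonneg (by linarith) (sq_nonneg γ)
    nlinarith [claimGlobal]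

set_option maxHeartbeats 1000000 in
theorem shrinkage_large_signal_bound
    (p : ℕ) (hp : 3 ≤ p) (β : ℝ) (hβ1 : 1 / 4 ≤ β) (hβ2 : β ≤ 1 / 2)
    (γ : ℝ) (hγ : γ ^ 2 = 2 + β⁻¹ * Real.log p)
    (hγ' : Real.sqrt (2 + 2 * Real.log 3) ≤ γ)
    (x : ℝ) (hx : 4 * γ ≤ x) :
    (∫ ε, (x - Real.exp (β * (x + ε) ^ 2) /
          ((p : ℝ) * Real.exp (2 * β) + Real.exp (β * (x + ε) ^ 2)) * (x + ε)) ^ 2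
        ∂(gaussianReal 0 1)) ≤
        2 + 16 * γ ^ 2 * (2 * Real.exp (-3 * γ ^ 2 / 2) + 4 * Real.exp (-2 * γ ^ 2)) ∧
      2 + 16 * γ ^ 2 * (2 * Real.exp (-3 * γ ^ 2 / 2) + 4 * Real.exp (-2 * γ ^ 2)) ≤
        0.6 * γ ^ 2 := by
  have hβ0 : 0 < β := by linarith
  have hp3 : (3:ℝ) ≤ (p:ℝ) := by exact_mod_cast hp
  have hp0 : (0:ℝ) < (p:ℝ) := by linarith
  -- log 3 > 1
  have hlog3 : 1 < Real.log 3 := by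
    have h3 : Real.exp 1 < 3 := lt_of_lt_of_le Real.exp_one_lt_d9 (by norm_num)
    calc (1:ℝ) = Real.log (Real.exp 1) := (Real.log_exp 1).symm
      _ < Real.log 3 := Real.log_lt_log (Real.exp_pos 1) h3
  have hs0 : (0:ℝ) ≤ 2 + 2*Real.log 3 := by linarith
  have ht' : 2 + 2*Real.log 3 ≤ γ^2 := by
    have hss := Real.sq_sqrt hs0
    nlinarith [Real.sqrt_nonneg (2+2*Real.log 3), hγ']
  have hγ4 : 4 ≤ γ^2 := by linarith
  have hγpos : 0 < γ := by nlinarith [Real.sqrt_nonneg (2+2*Real.log 3)]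
  -- numeric exponential bounds
  have hexp3 : (20:ℝ) ≤ Real.exp 3 := by
    have h : Real.exp 3 = Real.exp 1 ^ (3:ℕ) := by
      rw [← Real.exp_nat_mul]; norm_num
    have h2 : (2.7182818283:ℝ)^(3:ℕ) ≤ Real.exp 1 ^ (3:ℕ) :=
      pow_le_pow_left₀ (by norm_num) Real.exp_one_gt_d9.le 3
    rw [h]; nlinarith
  have hexp4 : (54:ℝ) ≤ Real.exp 4 := by
    have h : Real.exp 4 = Real.exp 1 ^ (4:ℕ) := by
      rw [← Real.exp_nat_mul]; norm_num
    have h2 : (2.7182818283:ℝ)^(4:ℕ) ≤ Real.exp 1 ^ (4:ℕ) :=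
      pow_le_pow_left₀ (by norm_num) Real.exp_one_gt_d9.le 4
    rw [h]; nlinarith
  have hE3 : Real.exp (-3*γ^2/2) ≤ 1/540 := by
    have hl27 : Real.log 27 = 3*Real.log 3 := by
      rw [show (27:ℝ) = 3^(3:ℕ) by norm_num, Real.log_pow]; norm_num
    have ha : -3*γ^2/2 ≤ -3 - Real.log 27 := by rw [hl27]; nlinarith
    have hb : Real.exp (-3 - Real.log 27) = Real.exp (-3) / 27 := by
      rw [Real.exp_sub, Real.exp_log (by norm_num : (0:ℝ) < 27)]
    have hc : Real.exp (-3) ≤ 1/20 := by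
      rw [Real.exp_neg, ← one_div]
      exact one_div_le_one_div_of_le (by norm_num) hexp3
    calc Real.exp (-3*γ^2/2) ≤ Real.exp (-3 - Real.log 27) := Real.exp_le_exp.2 ha
      _ = Real.exp (-3) / 27 := hb
      _ ≤ (1/20)/27 := by linarith
      _ = 1/540 := by norm_num
  have hE4 : Real.exp (-2*γ^2) ≤ 1/4374 := by
    have hl81 : Real.log 81 = 4*Real.log 3 := by
      rw [show (81:ℝ) = 3^(4:ℕ) by norm_num, Real.log_pow]; norm_num
    have ha : -2*γ^2 ≤ -4 - Real.log 81 := by rw [hl81]; nlinarith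
    have hb : Real.exp (-4 - Real.log 81) = Real.exp (-4) / 81 := by
      rw [Real.exp_sub, Real.exp_log (by norm_num : (0:ℝ) < 81)]
    have hc : Real.exp (-4) ≤ 1/54 := by
      rw [Real.exp_neg, ← one_div]
      exact one_div_le_one_div_of_le (by norm_num) hexp4
    calc Real.exp (-2*γ^2) ≤ Real.exp (-4 - Real.log 81) := Real.exp_le_exp.2 ha
      _ = Real.exp (-4) / 81 := hb
      _ ≤ (1/54)/81 := by linarith
      _ = 1/4374 := by norm_num
  have hE3p : 0 < Real.exp (-3*γ^2/2) := Real.exp_pos _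
  have hE4p : 0 < Real.exp (-2*γ^2) := Real.exp_pos _
  constructor
  · -- the integral bound
    have hPexp : (p:ℝ) * Real.exp (2*β) = Real.exp (β * γ^2) := by
      have hlogp : Real.log p = β * (γ^2 - 2) := by
        rw [hγ]
        field_simp
        ring
      have hpe : (p:ℝ) = Real.exp (Real.log p) := (Real.exp_log hp0).symm
      rw [hpe, hlogp, ← Real.exp_add]
      congr 1
      ring
    set C₁ := 8*γ^2*Real.exp (-3*γ^2/2) with hC1
    set K := 2*γ^2*Real.exp (-γ*x) with hK
    have hpt : ∀ ε : ℝ, (x - Real.exp (β * (x + ε) ^ 2) /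
          ((p : ℝ) * Real.exp (2 * β) + Real.exp (β * (x + ε) ^ 2)) * (x + ε)) ^ 2
        ≤ 2*ε^2 + C₁ + K * Real.exp (-2*γ*ε) := by
      intro ε
      have := pointwise_bound β γ x ((p:ℝ) * Real.exp (2*β)) hβ1 hγ4 hγpos hx hPexp ε
      rw [hC1, hK]
      calc _ ≤ 2*ε^2 + 8*γ^2*Real.exp (-3*γ^2/2)
            + 2*γ^2 * (Real.exp (-γ*x) * Real.exp (-2*γ*ε)) := this
        _ = 2*ε^2 + 8*γ^2*Real.exp (-3*γ^2/2)
            + 2*γ^2*Real.exp (-γ*x) * Real.exp (-2*γ*ε) := by ring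
    have hGid : (fun ε => φg ε * (2*ε^2 + C₁ + K * Real.exp (-2*γ*ε)))
        = fun ε => 2*(φg ε * ε^2) + (C₁ * φg ε + K * (φg ε * Real.exp (-2*γ*ε))) := by
      funext ε; ring
    have hGint : Integrable (fun ε => 2*ε^2 + C₁ + K * Real.exp (-2*γ*ε)) (gaussianReal 0 1) := by
      rw [integrable_gaussg_iff, hGid]
      exact ((key_sq_integrable.const_mul 2).add ((integrable_phig.const_mul C₁).add
        ((key_exp_integrable (-2*γ)).const_mul K)))
    have hmono := integral_mono_of_nonneg
      (ae_of_all _ fun ε => sq_nonneg _) hGint (ae_of_all _ hpt)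
    have hGval : ∫ ε, (2*ε^2 + C₁ + K * Real.exp (-2*γ*ε)) ∂(gaussianReal 0 1)
        = 2 + C₁ + K * Real.exp (2*γ^2) := by
      rw [integral_gaussg, hGid]
      have hI1 : Integrable (fun ε : ℝ => 2*(φg ε * ε^2)) := key_sq_integrable.const_mul 2
      have hI2 : Integrable (fun ε : ℝ => C₁ * φg ε) := integrable_phig.const_mul C₁
      have hI3 : Integrable (fun ε : ℝ => K * (φg ε * Real.exp (-2*γ*ε))) :=
        (key_exp_integrable (-2*γ)).const_mul K
      calc ∫ ε, (2*(φg ε * ε^2) + (C₁ * φg ε + K * (φg ε * Real.exp (-2*γ*ε))))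
          = (∫ ε, 2*(φg ε * ε^2))
            + ∫ ε, (C₁ * φg ε + K * (φg ε * Real.exp (-2*γ*ε))) :=
            MeasureTheory.integral_add hI1 (hI2.add hI3)
        _ = (∫ ε, 2*(φg ε * ε^2)) + ((∫ ε, C₁ * φg ε)
            + ∫ ε, K * (φg ε * Real.exp (-2*γ*ε))) := by
            rw [MeasureTheory.integral_add hI2 hI3]
        _ = 2*(∫ ε : ℝ, φg ε * ε^2) + (C₁ * (∫ ε : ℝ, φg ε)
            + K * ∫ ε : ℝ, φg ε * Real.exp (-2*γ*ε)) := by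
            rw [MeasureTheory.integral_const_mul, MeasureTheory.integral_const_mul,
              MeasureTheory.integral_const_mul]
        _ = 2 + C₁ + K * Real.exp (2*γ^2) := by
            rw [key_sq, integral_phig, key_exp, show ((-2*γ)^2/2) = 2*γ^2 by ring]
            ring
    have hKbound : K * Real.exp (2*γ^2) ≤ 2*γ^2*Real.exp (-2*γ^2) := by
      rw [hK, mul_assoc, mul_assoc, ← Real.exp_add]
      have harg : -γ*x + 2*γ^2 ≤ -2*γ^2 := by nlinarith
      have := Real.exp_le_exp.2 harg
      nlinarith [sq_nonneg γ, Real.exp_pos (-γ*x + 2*γ^2)]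
    rw [hGval] at hmono
    have hfinal : 2 + C₁ + K * Real.exp (2*γ^2)
        ≤ 2 + 16 * γ ^ 2 * (2 * Real.exp (-3 * γ ^ 2 / 2) + 4 * Real.exp (-2 * γ ^ 2)) := by
      rw [hC1]
      have h1 : Real.exp (-3*γ^2/2) = Real.exp (-3 * γ ^ 2 / 2) := by norm_num
      have h2 : Real.exp (-2*γ^2) = Real.exp (-2 * γ ^ 2) := by norm_num
      nlinarith [hKbound, sq_nonneg γ, hE3p, hE4p,
        mul_nonneg (sq_nonneg γ) hE3p.le, mul_nonneg (sq_nonneg γ) hE4p.le]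
    linarith
  · -- numeric bound
    nlinarith [mul_le_mul_of_nonneg_left hE3 (sq_nonneg γ),
      mul_le_mul_of_nonneg_left hE4 (sq_nonneg γ), hγ4]
end
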